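/- arXiv:math/0502107 — 4 statements merged into one kernel-verified Lean document; each statement's English description precedes it below -/
import Mathlib

section
/- For every partition λ, the rook poset P_λ has a maximum element 1̂, given by the greedy placement (for i = 1, 2, …, n in turn, place the rook of row i in the largest column ≤ λ_i not used by a lower row), and a minimum element 0̂ = (1, 2, …, n). -/
namespace RookPoset

/-- A partition with `n` parts: `part i` is the (1-based) part `λ_{i+1}`.
The parts are weakly increasing and contain the staircase (`λ_i ≥ i`, 1-based),
which in particular makes them positive. -/
structure Partition (n : ℕ) where
  part : Fin n → ℕ
  mono : Monotone part
  staircase : ∀ i : Fin n, (i : ℕ) + 1 ≤ part i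

/-- The largest part; equals `λ_n` when `n > 0`. -/
def Partition.maxPart {n : ℕ} (lam : Partition n) : ℕ :=
  Finset.univ.sup lam.part

/-- The part `λ_k` in 1-based indexing, with the convention `λ_m = n + 1` for `m > n`. -/
def Partition.partAt {n : ℕ} (lam : Partition n) (k : ℕ) : ℕ :=
  if h : 1 ≤ k ∧ k ≤ n then lam.part ⟨k - 1, by omega⟩ else n + 1

/-- The GJW sequence `(λ_1 - 1, λ_2 - 2, …, λ_n - n)` of a partition. -/
def Partition.gjw {n : ℕ} (lam : Partition n) : List ℕ :=
  (List.finRange n).map fun i => lam.part i - ((i : ℕ) + 1)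

/-- A maximal rook placement on the Ferrers board of `lam`: `col i` is the (1-based)
column of the rook in the (1-based) row `i + 1` (rows indexed bottom-up). -/
structure Placement {n : ℕ} (lam : Partition n) where
  col : Fin n → ℕ
  inj : Function.Injective col
  pos : ∀ i, 1 ≤ col i
  le_part : ∀ i, col i ≤ lam.part i

/-- The increasingly sorted list of the values `x i` over indices `i` with `(i : ℕ) < j`,
i.e. the sorted initial segment `{x_1, …, x_j}` (1-based). -/
def initSeg {n : ℕ} (x : Fin n → ℕ) (j : ℕ) : List ℕ :=
  ((Finset.univ.filter fun i : Fin n => (i : ℕ) < j).image x).sort (· ≤ ·)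

/-- The rook poset order: `x ≤ y` iff each sorted initial segment of `x` is
componentwise at most the corresponding sorted initial segment of `y`. -/
def rle {n : ℕ} {lam : Partition n} (x y : Placement lam) : Prop :=
  ∀ j : ℕ, List.Forall₂ (· ≤ ·) (initSeg x.col j) (initSeg y.col j)

/-- `y` covers `x` in the rook poset. -/
def rcovers {n : ℕ} {lam : Partition n} (x y : Placement lam) : Prop :=
  rle x y ∧ x ≠ y ∧ ∀ z : Placement lam, rle x z → rle z y → z = x ∨ z = y

/-- `y` covers `x` in the subposet induced on `S`. -/
def rcoversIn {n : ℕ} {lam : Partition n} (S : Set (Placement lam)) (x y : Placement lam) :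
    Prop :=
  x ∈ S ∧ y ∈ S ∧ rle x y ∧ x ≠ y ∧ ∀ z ∈ S, rle x z → rle z y → z = x ∨ z = y

/-- `t` is the greedy placement `1̂`: for each row in turn (bottom-up), the rook is placed
in the largest column `≤ λ_i` not used by a lower row. -/
def IsGreedy {n : ℕ} {lam : Partition n} (t : Placement lam) : Prop :=
  ∀ i : Fin n, ∀ m : ℕ, 1 ≤ m → m ≤ lam.part i →
    (∀ k : Fin n, k < i → t.col k ≠ m) → m ≤ t.col i

/-- `x` is obtained from `y` by the switch move on the rooks in rows `i < k`:
the rectangle spanned by the rooks at `(i, y.col i)` and `(k, y.col k)` contains no other rook,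
and the two rooks exchange columns. -/
def SwitchMove {n : ℕ} {lam : Partition n} (y x : Placement lam) (i k : Fin n) : Prop :=
  i < k ∧ y.col k < y.col i ∧
  (∀ r : Fin n, i ≤ r → r ≤ k → y.col k ≤ y.col r → y.col r ≤ y.col i → r = i ∨ r = k) ∧
  x.col i = y.col k ∧ x.col k = y.col i ∧
  ∀ r : Fin n, r ≠ i → r ≠ k → x.col r = y.col r

/-- `x` is obtained from `y` by a push move on the rook in row `i`: the rook moves to an
empty column `c` to its left such that every column strictly between `c` and its old column
contains a rook in a row below row `i`. -/
def PushMove {n : ℕ} {lam : Partition n} (y x : Placement lam) (i : Fin n) : Prop :=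
  ∃ c : ℕ, 1 ≤ c ∧ c < y.col i ∧ (∀ r : Fin n, y.col r ≠ c) ∧
    (∀ d : ℕ, c < d → d < y.col i → ∃ r : Fin n, r < i ∧ y.col r = d) ∧
    x.col i = c ∧ ∀ r : Fin n, r ≠ i → x.col r = y.col r

/-- `x` is obtained from `y` by a single switch or push move on the rook in row `i`. -/
def MoveOnRow {n : ℕ} {lam : Partition n} (y x : Placement lam) (i : Fin n) : Prop :=
  (∃ k : Fin n, SwitchMove y x i k) ∨ PushMove y x i

/-- Two coatoms `c, c'` of the rook poset (with top element `t`) are entangled: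
there are two distinct elements each of which is covered by both `c` and `c'`
and lies below no other coatom. -/
def Entangled {n : ℕ} {lam : Partition n} (t c c' : Placement lam) : Prop :=
  ∃ z₁ z₂ : Placement lam, z₁ ≠ z₂ ∧
    (rcovers z₁ c ∧ rcovers z₁ c' ∧
      ∀ d : Placement lam, rcovers d t → d ≠ c → d ≠ c' → ¬ rle z₁ d) ∧
    (rcovers z₂ c ∧ rcovers z₂ c' ∧
      ∀ d : Placement lam, rcovers d t → d ≠ c → d ≠ c' → ¬ rle z₂ d)

/-- `X_I`: the set of elements of the rook poset lying below no coatom outside `I`. -/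
def Xset {n : ℕ} {lam : Partition n} (t : Placement lam) (I : Set (Placement lam)) :
    Set (Placement lam) :=
  {z : Placement lam | ∀ c' : Placement lam, rcovers c' t → c' ∉ I → ¬ rle z c'}

/-- The completed permutation `σ_x` of `{1, …, λ_n}` (as a function on 1-based positions):
position `i ≤ n` holds `x_i`, and the remaining positions hold the unused values in
increasing order (i.e. each subsequent position receives the smallest value not yet used). -/
def Placement.sigma {n : ℕ} {lam : Partition n} (x : Placement lam) : ℕ → ℕ := fun a =>
  if h : 1 ≤ a ∧ a ≤ n then x.col ⟨a - 1, by omega⟩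
  else ((Finset.Icc 1 lam.maxPart \ Finset.univ.image x.col).sort (· ≤ ·)).getD (a - n - 1) 0

/-- The rank `r(x)`: the number of inversions of the completed permutation `σ_x`. -/
def Placement.rank {n : ℕ} {lam : Partition n} (x : Placement lam) : ℕ :=
  ((Finset.Icc 1 lam.maxPart ×ˢ Finset.Icc 1 lam.maxPart).filter
    fun p => p.1 < p.2 ∧ x.sigma p.2 < x.sigma p.1).card

/-- Break a list after every entry equal to `1`. -/
def breakAfterOnes : List ℕ → List (List ℕ)
  | [] => []
  | a :: rest =>
    if a = 1 then [a] :: breakAfterOnes rest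
    else
      match breakAfterOnes rest with
      | [] => [[a]]
      | b :: bs => (a :: b) :: bs

/-- The multiset of blocks of a partition: break the GJW sequence after every entry
equal to `1` and delete all entries equal to `0` (discarding empty blocks). -/
def Partition.blocks {n : ℕ} (lam : Partition n) : Multiset (List ℕ) :=
  (((breakAfterOnes lam.gjw).map fun b => b.filter (· ≠ 0)).filter
    (· ≠ ([] : List ℕ)) : List (List ℕ))

/-- The conjugate of a block `b = (g_1, …, g_k)` ending in `1`: it is the GJW sequence of the
conjugate partition `ν'` of the partition `ν` with `ν_i = g_i + i`, where
`ν'_i = k + 2 - min {m | ν_m ≥ k + 2 - i}` with the convention `ν_{k+1} = k + 1`. -/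
noncomputable def conjBlock (b : List ℕ) : List ℕ :=
  let k := b.length
  let nu : ℕ → ℕ := fun m => if m ≤ k then b.getD (m - 1) 0 + m else k + 1
  (List.range k).map fun i0 =>
    let i := i0 + 1
    (k + 2 - sInf {m : ℕ | 1 ≤ m ∧ k + 2 - i ≤ nu m}) - i

/-- A block ends in `1`. -/
def endsInOne (b : List ℕ) : Prop := b.getLast? = some 1

/-- Two blocks are equivalent when they are equal, or one ends in `1` and the other is its
conjugate block. -/
def BlockEquiv (b b' : List ℕ) : Prop :=
  b = b' ∨ (endsInOne b ∧ b' = conjBlock b) ∨ (endsInOne b' ∧ b = conjBlock b')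

/-- Two partitions have matching block data: their multisets of blocks become equal after
replacing some blocks ending in `1` by their conjugate blocks. -/
def MatchingBlocks {n m : ℕ} (lam : Partition n) (mu : Partition m) : Prop :=
  Multiset.Rel BlockEquiv lam.blocks mu.blocks

/-- The rook posets of `lam` and `mu` are isomorphic as partially ordered sets. -/
def RookIso {n m : ℕ} (lam : Partition n) (mu : Partition m) : Prop :=
  ∃ e : Placement lam ≃ Placement mu, ∀ a b : Placement lam, rle a b ↔ rle (e a) (e b)

/-- A function `τ`, viewed as a permutation of `{1, …, N}`, is `312`-avoiding. -/
def Avoids312 (N : ℕ) (τ : ℕ → ℕ) : Prop :=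
  ∀ a b c : ℕ, 1 ≤ a → a < b → b < c → c ≤ N → ¬ (τ b < τ c ∧ τ c < τ a)

/-- A permutation of `Fin N` is `312`-avoiding. -/
def Avoids312P {N : ℕ} (τ : Equiv.Perm (Fin N)) : Prop :=
  ∀ a b c : Fin N, a < b → b < c → ¬ (τ b < τ c ∧ τ c < τ a)

/-- The Bruhat order on permutations, characterized by componentwise dominance of the
increasingly sorted initial segments. -/
def bruhatLE {N : ℕ} (σ τ : Equiv.Perm (Fin N)) : Prop :=
  ∀ j : ℕ, List.Forall₂ (· ≤ ·)
    (initSeg (fun a : Fin N => (σ a : ℕ)) j) (initSeg (fun a : Fin N => (τ a : ℕ)) j)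

end RookPoset

/-!
Both bounds go through a counting criterion: `x ≤ y` as soon as, for all `j` and `v`, among
the first `j` rows `y` has at least as many rooks in columns `≥ v` as `x`; for increasing lists
of equal length, domination of these upper-tail counts is entrywise domination.

For a greedy placement `t` this is an induction on `j`. The only delicate row `r` is one with
`x_r ≥ v > t_r`: greediness then forces every column of `[v, λ_r]` to be occupied by `t` below
row `r`, and `x` cannot have more than `λ_r + 1 - v` rooks in columns `≥ v` among its first
`r + 1` rows. For `(1, …, n)` it is the fact that at most `v - 1` rooks of any placement lie
left of column `v`.
-/

open Finset

theorem List.forall₂_le_of_countP_le {α : Type*} [LinearOrder α] :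
    ∀ {l₁ l₂ : List α}, l₁.Pairwise (· < ·) → l₂.Pairwise (· < ·) →
      l₁.length = l₂.length →
      (∀ v, l₁.countP (v ≤ ·) ≤ l₂.countP (v ≤ ·)) → List.Forall₂ (· ≤ ·) l₁ l₂
  | [], [], _, _, _, _ => .nil
  | a :: s, b :: t, h₁, h₂, hlen, h => by
    obtain ⟨ha, hs⟩ := List.pairwise_cons.mp h₁
    obtain ⟨hb, ht⟩ := List.pairwise_cons.mp h₂
    have hlen : s.length = t.length := by simpa using hlen
    have hab : a ≤ b := by
      by_contra! hba
      have := h a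
      rw [List.countP_cons_of_pos (by simp), List.countP_cons_of_neg (by simpa using hba),
        List.countP_eq_length.mpr fun m hm => by simpa using (ha m hm).le] at this
      have := t.countP_le_length (p := (a ≤ ·))
      omega
    refine .cons hab (forall₂_le_of_countP_le hs ht hlen fun v => ?_)
    have hv := h v
    rcases le_or_gt v a with hva | hva
    · rwa [List.countP_cons_of_pos (by simpa using hva),
        List.countP_cons_of_pos (by simpa using hva.trans hab), add_le_add_iff_right] at hv
    rcases le_or_gt v b with hvb | hvb
    · rw [List.countP_eq_length (l := t) |>.mpr fun m hm => by simpa using hvb.trans (hb m hm).le,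
        ← hlen]
      exact s.countP_le_length
    · rwa [List.countP_cons_of_neg (by simpa using hva),
        List.countP_cons_of_neg (by simpa using hvb)] at hv

theorem Finset.forall₂_sort_le_of_card_filter_le {α : Type*} [LinearOrder α] {S T : Finset α}
    (hcard : #S = #T) (h : ∀ v, #{s ∈ S | v ≤ s} ≤ #{t ∈ T | v ≤ t}) :
    List.Forall₂ (· ≤ ·) S.sort T.sort := by
  have hcount (U : Finset α) (v : α) : U.sort.countP (v ≤ ·) = #{u ∈ U | v ≤ u} := by
    rw [← Multiset.coe_countP, sort_eq, Multiset.countP_eq_card_filter]; rfl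
  refine List.forall₂_le_of_countP_le (sortedLT_sort S).pairwise (sortedLT_sort T).pairwise
    (by simpa using hcard) fun v => ?_
  rw [hcount, hcount]
  exact h v

namespace RookPoset

section

variable {n : ℕ} {lam : Partition n}

def countAtLeast (x : Fin n → ℕ) (j v : ℕ) : ℕ :=
  #{i : Fin n | (i : ℕ) < j ∧ v ≤ x i}

theorem rle_of_countAtLeast_le {x y : Placement lam}
    (h : ∀ j v, countAtLeast x.col j v ≤ countAtLeast y.col j v) : rle x y := by
  intro j
  refine forall₂_sort_le_of_card_filter_le ?_ fun v => ?_
  · rw [card_image_of_injective _ x.inj, card_image_of_injective _ y.inj]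
  · rw [filter_image, filter_image, card_image_of_injective _ x.inj,
      card_image_of_injective _ y.inj, filter_filter, filter_filter]
    exact h j v

theorem countAtLeast_succ (x : Fin n → ℕ) (r : Fin n) (v : ℕ) :
    countAtLeast x (r + 1) v = countAtLeast x r v + if v ≤ x r then 1 else 0 := by
  unfold countAtLeast
  split_ifs with h
  · rw [← card_insert_of_notMem (a := r) (by simp)]
    refine congrArg card ?_
    ext i
    simp only [mem_filter, mem_univ, true_and, mem_insert, Fin.ext_iff]
    grind
  · rw [add_zero]
    refine congrArg card ?_
    ext i
    simp only [mem_filter, mem_univ, true_and]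
    grind

theorem countAtLeast_succ_of_le (x : Fin n → ℕ) {j : ℕ} (hj : n ≤ j) (v : ℕ) :
    countAtLeast x (j + 1) v = countAtLeast x j v := by
  unfold countAtLeast
  congr 1
  ext i
  simp only [mem_filter, mem_univ, true_and, and_congr_left_iff]
  omega

noncomputable def greedyCol (lam : Partition n) (i : Fin n) : ℕ :=
  (Icc 1 (lam.part i) \ (Iio i).attach.image fun k : Iio i => greedyCol lam k.1).sup id
termination_by i
decreasing_by exact Fin.lt_def.mp (mem_Iio.mp k.2)

noncomputable def greedyFree (lam : Partition n) (i : Fin n) : Finset ℕ :=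
  Icc 1 (lam.part i) \ (Iio i).image (greedyCol lam)

theorem greedyCol_eq_sup (i : Fin n) : greedyCol lam i = (greedyFree lam i).sup id := by
  rw [greedyCol, greedyFree]
  conv_rhs => rw [← attach_image_val (s := Iio i), image_image]
  rfl

theorem greedyFree_nonempty (lam : Partition n) (i : Fin n) : (greedyFree lam i).Nonempty := by
  have hfree := le_card_sdiff ((Iio i).image (greedyCol lam)) (Icc 1 (lam.part i))
  have hused : #((Iio i).image (greedyCol lam)) ≤ i := card_image_le.trans (Fin.card_Iio i).le
  have := lam.staircase i
  rw [Nat.card_Icc] at hfree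
  rw [← card_pos, greedyFree]
  omega

theorem greedyCol_mem_greedyFree (lam : Partition n) (i : Fin n) :
    greedyCol lam i ∈ greedyFree lam i := by
  obtain ⟨m, hm, hsup⟩ := exists_mem_eq_sup _ (greedyFree_nonempty lam i) id
  rwa [greedyCol_eq_sup, hsup]

theorem le_greedyCol {i : Fin n} {m : ℕ} (hm : m ∈ greedyFree lam i) : m ≤ greedyCol lam i := by
  rw [greedyCol_eq_sup]
  exact le_sup (f := id) hm

theorem greedyCol_mem_Icc (lam : Partition n) (i : Fin n) :
    greedyCol lam i ∈ Icc 1 (lam.part i) :=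
  (mem_sdiff.mp (greedyCol_mem_greedyFree lam i)).1

theorem greedyCol_ne_of_lt {k i : Fin n} (h : k < i) : greedyCol lam k ≠ greedyCol lam i :=
  fun heq => (mem_sdiff.mp (greedyCol_mem_greedyFree lam i)).2 <|
    mem_image.mpr ⟨k, mem_Iio.mpr h, heq⟩

noncomputable def greedy (lam : Partition n) : Placement lam where
  col := greedyCol lam
  inj i k h := by
    by_contra hne
    rcases lt_or_gt_of_ne hne with hlt | hlt
    exacts [greedyCol_ne_of_lt hlt h, greedyCol_ne_of_lt hlt h.symm]
  pos i := (mem_Icc.mp (greedyCol_mem_Icc lam i)).1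
  le_part i := (mem_Icc.mp (greedyCol_mem_Icc lam i)).2

theorem isGreedy_greedy (lam : Partition n) : IsGreedy (greedy lam) := by
  refine fun i m h1 h2 hfree => le_greedyCol (mem_sdiff.mpr ⟨mem_Icc.mpr ⟨h1, h2⟩, ?_⟩)
  rintro hm
  obtain ⟨k, hk, hkm⟩ := mem_image.mp hm
  exact hfree k (mem_Iio.mp hk) hkm

theorem countAtLeast_succ_le (x : Placement lam) (r : Fin n) (v : ℕ) :
    countAtLeast x.col (r + 1) v ≤ lam.part r + 1 - v := by
  have hcols : ({i | (i : ℕ) < r + 1 ∧ v ≤ x.col i} : Finset (Fin n)).image x.col ⊆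
      Icc v (lam.part r) := by
    intro m hm
    obtain ⟨i, hi, rfl⟩ := mem_image.mp hm
    simp only [mem_filter, mem_univ, true_and] at hi
    exact mem_Icc.mpr ⟨hi.2, (x.le_part i).trans (lam.mono (Fin.le_def.mpr (by omega)))⟩
  calc countAtLeast x.col (r + 1) v
      = #(({i | (i : ℕ) < r + 1 ∧ v ≤ x.col i} : Finset (Fin n)).image x.col) :=
        (card_image_of_injective _ x.inj).symm
    _ ≤ #(Icc v (lam.part r)) := card_le_card hcols
    _ = lam.part r + 1 - v := Nat.card_Icc _ _

theorem IsGreedy.part_add_one_sub_le_countAtLeast {t : Placement lam} (ht : IsGreedy t)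
    {r : Fin n} {v : ℕ} (hv : t.col r < v) : lam.part r + 1 - v ≤ countAtLeast t.col r v := by
  have hcover : Icc v (lam.part r) ⊆
      ({i | (i : ℕ) < r ∧ v ≤ t.col i} : Finset (Fin n)).image t.col := by
    intro m hm
    obtain ⟨hvm, hm⟩ := mem_Icc.mp hm
    by_contra hnot
    have := ht r m (by have := t.pos r; omega) hm fun k hk hkm =>
      hnot (mem_image.mpr ⟨k, by simp [hk, hkm, hvm], hkm⟩)
    omega
  calc lam.part r + 1 - v = #(Icc v (lam.part r)) := (Nat.card_Icc _ _).symm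
    _ ≤ _ := card_le_card hcover
    _ ≤ countAtLeast t.col r v := card_image_le

theorem IsGreedy.countAtLeast_le {t : Placement lam} (ht : IsGreedy t) (x : Placement lam)
    (j v : ℕ) : countAtLeast x.col j v ≤ countAtLeast t.col j v := by
  induction j with
  | zero => simp [countAtLeast]
  | succ j ih =>
    rcases lt_or_ge j n with hj | hj
    · obtain ⟨r, rfl⟩ : ∃ r : Fin n, (r : ℕ) = j := ⟨⟨j, hj⟩, rfl⟩
      by_cases htv : v ≤ t.col r
      · rw [countAtLeast_succ, countAtLeast_succ, if_pos htv]
        split_ifs <;> omega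
      by_cases hxv : v ≤ x.col r
      · calc countAtLeast x.col (r + 1) v ≤ lam.part r + 1 - v := countAtLeast_succ_le x r v
          _ ≤ countAtLeast t.col r v := ht.part_add_one_sub_le_countAtLeast (not_le.mp htv)
          _ ≤ countAtLeast t.col (r + 1) v := by rw [countAtLeast_succ]; omega
      · rwa [countAtLeast_succ, countAtLeast_succ, if_neg htv, if_neg hxv]
    · rwa [countAtLeast_succ_of_le _ hj, countAtLeast_succ_of_le _ hj]

theorem IsGreedy.rle {t : Placement lam} (ht : IsGreedy t) (x : Placement lam) : rle x t :=
  rle_of_countAtLeast_le (ht.countAtLeast_le x)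

def staircase (lam : Partition n) : Placement lam where
  col i := i + 1
  inj i k h := Fin.ext (by simpa using h)
  pos _ := Nat.le_add_left 1 _
  le_part := lam.staircase

theorem card_col_lt_le (x : Placement lam) (v : ℕ) : #{i | x.col i < v} ≤ v - 1 := by
  have hcols : ({i | x.col i < v} : Finset (Fin n)).image x.col ⊆ Icc 1 (v - 1) := by
    intro m hm
    obtain ⟨i, hi, rfl⟩ := mem_image.mp hm
    exact mem_Icc.mpr ⟨x.pos i, by simp only [mem_filter, mem_univ, true_and] at hi; omega⟩
  calc #{i | x.col i < v} = #(({i | x.col i < v} : Finset (Fin n)).image x.col) :=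
        (card_image_of_injective _ x.inj).symm
    _ ≤ #(Icc 1 (v - 1)) := card_le_card hcols
    _ = v - 1 := by simp

theorem min_sub_le_countAtLeast (x : Placement lam) (j v : ℕ) :
    min n j - (v - 1) ≤ countAtLeast x.col j v := by
  have hcover : ({i | (i : ℕ) < j} : Finset (Fin n)) ⊆
      ({i | (i : ℕ) < j ∧ v ≤ x.col i} : Finset (Fin n)) ∪
        ({i | x.col i < v} : Finset (Fin n)) := by
    intro i
    simp only [mem_filter, mem_univ, true_and, mem_union]
    omega
  have hrows := (card_le_card hcover).trans (card_union_le _ _)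
  rw [Fin.card_filter_val_lt] at hrows
  have := card_col_lt_le x v
  unfold countAtLeast
  omega

theorem countAtLeast_staircase (j v : ℕ) :
    countAtLeast (fun i : Fin n => (i : ℕ) + 1) j v = min n j - (v - 1) := by
  rw [countAtLeast, ← card_map Fin.valEmbedding, ← Nat.card_Ico]
  congr 1
  ext m
  simp only [mem_map, mem_filter, mem_univ, true_and, Fin.valEmbedding_apply, mem_Ico]
  constructor
  · rintro ⟨i, hi, rfl⟩
    omega
  · rintro ⟨hv, hm⟩
    exact ⟨⟨m, by omega⟩, by simp only; omega, rfl⟩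

theorem staircase_rle (x : Placement lam) : rle (staircase lam) x :=
  rle_of_countAtLeast_le fun j v => (countAtLeast_staircase j v).trans_le
    (min_sub_le_countAtLeast x j v)

end

/-- The rook poset has a maximum, given by the greedy placement, and a
minimum, given by `(1, 2, …, n)`. -/
theorem rookPoset_has_top_and_bot {n : ℕ} (lam : Partition n) :
    (∃ t : Placement lam, IsGreedy t ∧ ∀ x : Placement lam, rle x t) ∧
    (∃ b : Placement lam, (∀ i : Fin n, b.col i = (i : ℕ) + 1) ∧
      ∀ x : Placement lam, rle b x) :=
  ⟨⟨greedy lam, isGreedy_greedy lam, (isGreedy_greedy lam).rle⟩,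
    ⟨staircase lam, fun _ => rfl, staircase_rle⟩⟩

end RookPoset
end

section
/- Let λ be a partition with n parts and λ_n = n + 1, and let λ′ be its conjugate. Then the rook posets P_λ and P_{λ′} are isomorphic as partially ordered sets. -/
/-! Since `λ_n = n + 1`, a maximal rook placement on `λ` lives in the `(n+1) × (n+1)` square and
completes uniquely to a permutation `σ` of `Fin (n + 1)`, the last row taking the unused column;
the placements on `λ` are exactly the permutations with `σ a < λ_{a+1}` for every row `a`
(`λ_{n+1} = n + 1` imposes nothing). Comparing sorted initial segments is the same as comparing
the rank counts `#{a < j | σ a < m}`, so the rook order is the Bruhat order.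

With `N = n + 1`, the transpose across the antidiagonal, `σ ↦ w₀ σ⁻¹ w₀`, carries the board of `λ`
onto that of `λ'`: this is what conjugation means. It turns the rank count of `σ` at `(j, m)` into the
count of `σ` in the opposite corner `[N - m, N) × [N - j, N)`, which differs from the rank count at
`(N - m, N - j)` by an amount independent of `σ`. Hence it preserves the order in both directions. -/

open Finset Equiv

theorem List.countP_le_countP_of_forall₂ {α : Type*} [LinearOrder α] {l₁ l₂ : List α}
    (h : List.Forall₂ (· ≤ ·) l₁ l₂) (m : α) :
    l₂.countP (· ≤ m) ≤ l₁.countP (· ≤ m) := by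
  induction h with
  | nil => rfl
  | @cons a b _ _ hab _ ih =>
    simp only [List.countP_cons]
    by_cases hb : b ≤ m
    · simp [hb, hab.trans hb, ih]
    · simp only [hb, decide_false, Bool.false_eq_true, if_false]
      split_ifs <;> omega

theorem List.forall₂_of_countP_le {α : Type*} [LinearOrder α] :
    ∀ {l₁ l₂ : List α}, l₁.Pairwise (· ≤ ·) → l₂.Pairwise (· ≤ ·) → l₁.length = l₂.length →
      (∀ m, l₂.countP (· ≤ m) ≤ l₁.countP (· ≤ m)) → List.Forall₂ (· ≤ ·) l₁ l₂
  | [], [], _, _, _, _ => .nil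
  | a :: l₁, b :: l₂, h₁, h₂, hlen, h => by
    rw [List.pairwise_cons] at h₁ h₂
    have hab : a ≤ b := by
      by_contra! hba
      have hb := h b
      have : l₁.countP (· ≤ b) = 0 := List.countP_eq_zero.mpr fun c hc => by
        simpa using hba.trans_le (h₁.1 c hc)
      simp [not_le.mpr hba, this] at hb
    refine .cons hab (List.forall₂_of_countP_le h₁.2 h₂.2 (by simpa using hlen) fun m => ?_)
    by_cases hbm : b ≤ m
    · have := h m
      simp only [List.countP_cons, hbm, hab.trans hbm, decide_true, if_true] at this
      omega
    · have : l₂.countP (· ≤ m) = 0 := List.countP_eq_zero.mpr fun c hc => by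
        simpa using (not_le.mp hbm).trans_le (h₂.1 c hc)
      omega
  | [], _ :: _, _, _, hlen, _ | _ :: _, [], _, _, hlen, _ => by simp at hlen

theorem Finset.countP_sort_le {α : Type*} [LinearOrder α] (s : Finset α) (m : α) :
    (s.sort (· ≤ ·)).countP (· ≤ m) = #{a ∈ s | a ≤ m} := by
  rw [(s.sort_perm_toList (· ≤ ·)).countP_eq, ← Multiset.coe_countP, Finset.coe_toList,
    Multiset.countP_eq_card_filter]
  rfl

theorem Finset.forall₂_sort_iff {α : Type*} [LinearOrder α] {s t : Finset α} (h : #s = #t) :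
    List.Forall₂ (· ≤ ·) (s.sort (· ≤ ·)) (t.sort (· ≤ ·)) ↔
      ∀ m, #{a ∈ t | a ≤ m} ≤ #{a ∈ s | a ≤ m} := by
  simp only [← Finset.countP_sort_le]
  exact ⟨fun hst m => List.countP_le_countP_of_forall₂ hst m,
    List.forall₂_of_countP_le (s.pairwise_sort _) (t.pairwise_sort _) (by simpa using h)⟩

namespace Equiv.Perm

variable {N : ℕ}

def lowCount (σ : Perm (Fin N)) (j m : ℕ) : ℕ := #{a : Fin N | (a : ℕ) < j ∧ (σ a : ℕ) < m}

def highCount (σ : Perm (Fin N)) (j m : ℕ) : ℕ := #{a : Fin N | j ≤ (a : ℕ) ∧ m ≤ (σ a : ℕ)}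

/-- The Bruhat order `σ ≤ τ`, in its rank-count form. -/
def RankLE (σ τ : Perm (Fin N)) : Prop := ∀ j m, lowCount τ j m ≤ lowCount σ j m

def antidiagTranspose (σ : Perm (Fin N)) : Perm (Fin N) := Fin.revPerm * σ⁻¹ * Fin.revPerm

theorem antidiagTranspose_apply (σ : Perm (Fin N)) (a : Fin N) :
    antidiagTranspose σ a = Fin.rev (σ⁻¹ (Fin.rev a)) := rfl

theorem antidiagTranspose_involutive : Function.Involutive (antidiagTranspose (N := N)) := by
  intro σ
  ext a
  simp [antidiagTranspose, Perm.mul_apply, Perm.inv_def, Fin.revPerm_symm]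

theorem card_filter_val_apply_lt (σ : Perm (Fin N)) (m : ℕ) :
    #{a : Fin N | (σ a : ℕ) < m} = min N m := by
  rw [← Fin.card_filter_val_lt]
  exact card_equiv σ (by simp)

theorem lowCount_of_le (σ : Perm (Fin N)) {j : ℕ} (hj : N ≤ j) (m : ℕ) :
    lowCount σ j m = min N m := by
  rw [← card_filter_val_apply_lt σ m]
  exact congrArg card (filter_congr fun a _ => and_iff_right (a.isLt.trans_le hj))

theorem lowCount_add (σ : Perm (Fin N)) {j : ℕ} (hj : j ≤ N) (m : ℕ) :
    lowCount σ j m + (N - m) = j + highCount σ j m := by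
  have hrows := card_filter_add_card_filter_not (s := {a : Fin N | (a : ℕ) < j})
    fun a => (σ a : ℕ) < m
  have hcols := card_filter_add_card_filter_not (s := {a : Fin N | m ≤ (σ a : ℕ)})
    fun a => (a : ℕ) < j
  have htot := card_filter_add_card_filter_not (s := univ) fun a : Fin N => (σ a : ℕ) < m
  simp only [filter_filter, not_lt, card_filter_val_apply_lt, Fin.card_filter_val_lt,
    card_univ, Fintype.card_fin] at hrows hcols htot
  unfold lowCount highCount
  simp only [and_comm] at hrows hcols ⊢
  omega

theorem lowCount_antidiagTranspose (σ : Perm (Fin N)) (j m : ℕ) :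
    lowCount (antidiagTranspose σ) j m = highCount σ (N - m) (N - j) := by
  refine card_equiv (Fin.revPerm.trans σ.symm) fun a => ?_
  have := (σ.symm a.rev).isLt
  have := a.isLt
  rw [mem_filter, mem_filter]
  simp only [mem_univ, true_and, antidiagTranspose_apply, Fin.val_rev, trans_apply,
    Fin.revPerm_apply, apply_symm_apply, Perm.inv_def]
  omega

theorem RankLE.highCount_le {σ τ : Perm (Fin N)} (h : RankLE σ τ) {j : ℕ} (hj : j ≤ N) (m : ℕ) :
    highCount τ j m ≤ highCount σ j m := by
  have := h j m
  have := lowCount_add σ hj m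
  have := lowCount_add τ hj m
  omega

theorem RankLE.antidiagTranspose {σ τ : Perm (Fin N)} (h : RankLE σ τ) :
    RankLE (antidiagTranspose σ) (antidiagTranspose τ) := fun j m => by
  simpa only [lowCount_antidiagTranspose] using h.highCount_le (Nat.sub_le N m) (N - j)

theorem rankLE_antidiagTranspose_iff {σ τ : Perm (Fin N)} :
    RankLE (antidiagTranspose σ) (antidiagTranspose τ) ↔ RankLE σ τ :=
  ⟨fun h => by simpa only [antidiagTranspose_involutive _] using h.antidiagTranspose,
    RankLE.antidiagTranspose⟩

theorem eq_of_apply_castSucc {n : ℕ} {σ τ : Perm (Fin (n + 1))}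
    (h : ∀ i : Fin n, σ i.castSucc = τ i.castSucc) : σ = τ := by
  have hlast : τ.symm (σ (Fin.last n)) = Fin.last n := by
    by_contra hne
    obtain ⟨i, hi⟩ := Fin.exists_castSucc_eq.mpr hne
    have : σ (Fin.last n) = σ i.castSucc := by rw [h, hi, apply_symm_apply]
    exact Fin.castSucc_ne_last i (σ.injective this).symm
  ext a : 1
  induction a using Fin.lastCases with
  | last => exact τ.symm_apply_eq.mp hlast
  | cast i => rw [h]

noncomputable def restrictCastSucc (n : ℕ) : Perm (Fin (n + 1)) ≃ (Fin n ↪ Fin (n + 1)) :=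
  Equiv.ofBijective (fun σ => Fin.castSuccEmb.trans σ.toEmbedding) <|
    (Fintype.bijective_iff_injective_and_card _).mpr
      ⟨fun _ _ h => eq_of_apply_castSucc fun i => DFunLike.congr_fun h i, by
        rw [Fintype.card_perm, Fintype.card_embedding_eq, Fintype.card_fin, Fintype.card_fin]
        simpa using (Nat.factorial_mul_descFactorial (Nat.le_succ n)).symm⟩

@[simp]
theorem restrictCastSucc_apply {n : ℕ} (σ : Perm (Fin (n + 1))) (i : Fin n) :
    restrictCastSucc n σ i = σ i.castSucc := rfl

end Equiv.Perm

namespace RookPoset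

open Equiv.Perm

theorem forall₂_initSeg_iff {n : ℕ} {x y : Fin n → ℕ} (hx : Function.Injective x)
    (hy : Function.Injective y) (j : ℕ) :
    List.Forall₂ (· ≤ ·) (initSeg x j) (initSeg y j) ↔
      ∀ m, #{i : Fin n | (i : ℕ) < j ∧ y i ≤ m} ≤ #{i : Fin n | (i : ℕ) < j ∧ x i ≤ m} := by
  unfold initSeg
  rw [Finset.forall₂_sort_iff (by rw [card_image_of_injective _ hx, card_image_of_injective _ hy])]
  simp only [filter_image, card_image_of_injective _ hx, card_image_of_injective _ hy,
    filter_filter]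

namespace Partition

variable {n : ℕ} (lam : Partition n)

def rowsAtLeast (c : ℕ) : Set ℕ := {k | 1 ≤ k ∧ c ≤ lam.partAt k}

theorem partAt_val_add_one (i : Fin n) : lam.partAt ((i : ℕ) + 1) = lam.part i :=
  dif_pos ⟨by omega, i.isLt⟩

theorem partAt_of_lt {k : ℕ} (hk : n < k) : lam.partAt k = n + 1 :=
  dif_neg (by omega)

theorem le_partAt {k : ℕ} (hk : k ≤ n + 1) : k ≤ lam.partAt k := by
  unfold partAt
  split_ifs with h
  · simpa [Nat.sub_add_cancel h.1] using lam.staircase ⟨k - 1, by omega⟩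
  · exact hk

theorem part_le_of_partAt (hlast : lam.partAt n = n + 1) (i : Fin n) : lam.part i ≤ n + 1 := by
  have hn := i.pos
  calc lam.part i ≤ lam.part ⟨n - 1, by omega⟩ := lam.mono (Fin.mk_le_mk.mpr (by omega))
    _ = lam.partAt n := by rw [← partAt_val_add_one]; congr 1; simp only; omega
    _ = n + 1 := hlast

variable {lam}

theorem partAt_le_partAt (hle : ∀ i, lam.part i ≤ n + 1) {k l : ℕ} (hk : 1 ≤ k) (hkl : k ≤ l) :
    lam.partAt k ≤ lam.partAt l := by
  unfold partAt
  split_ifs with hk' hl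
  · exact lam.mono (Fin.mk_le_mk.mpr (by omega))
  · exact hle _
  · omega
  · exact le_rfl

theorem nonempty_rowsAtLeast {c : ℕ} (hc : c ≤ n + 1) : (lam.rowsAtLeast c).Nonempty :=
  ⟨n + 1, by omega, by rwa [lam.partAt_of_lt (by omega)]⟩

theorem one_le_sInf_rowsAtLeast {c : ℕ} (hc : c ≤ n + 1) : 1 ≤ sInf (lam.rowsAtLeast c) :=
  (Nat.sInf_mem (nonempty_rowsAtLeast hc)).1

theorem sInf_rowsAtLeast_le_iff (hle : ∀ i, lam.part i ≤ n + 1) {c k : ℕ} (hc : c ≤ n + 1)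
    (hk : 1 ≤ k) : sInf (lam.rowsAtLeast c) ≤ k ↔ c ≤ lam.partAt k := by
  refine ⟨fun hsk => ?_, fun h => Nat.sInf_le ⟨hk, h⟩⟩
  obtain ⟨hs, hcs⟩ := Nat.sInf_mem (nonempty_rowsAtLeast (lam := lam) hc)
  exact hcs.trans (partAt_le_partAt hle hs hsk)

end Partition

def IsConjugate {n : ℕ} (lam lam' : Partition n) : Prop :=
  ∀ i : Fin n, lam'.part i = n + 2 - sInf (lam.rowsAtLeast (n + 2 - ((i : ℕ) + 1)))

/-- Rows and columns are `0`-based here, so the cell `(a, b)` is on the board iff `b < λ_{a+1}`. -/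
def IsOnBoard {n : ℕ} (lam : Partition n) (σ : Perm (Fin (n + 1))) : Prop :=
  ∀ a, (σ a : ℕ) < lam.partAt ((a : ℕ) + 1)

namespace IsConjugate

variable {n : ℕ} {lam lam' : Partition n}

theorem part_le (h : IsConjugate lam lam') (i : Fin n) : lam'.part i ≤ n + 1 := by
  have := Partition.one_le_sInf_rowsAtLeast (lam := lam) (c := n + 2 - ((i : ℕ) + 1)) (by omega)
  rw [h i]
  omega

theorem lt_partAt_iff (h : IsConjugate lam lam') (hle : ∀ i, lam.part i ≤ n + 1)
    (a b : Fin (n + 1)) :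
    (b : ℕ) < lam.partAt ((a : ℕ) + 1) ↔ (a.rev : ℕ) < lam'.partAt ((b.rev : ℕ) + 1) := by
  have ha := a.isLt
  have hb := b.isLt
  rw [Fin.val_rev, Fin.val_rev]
  rcases Nat.eq_zero_or_pos (b : ℕ) with hb0 | hb0
  · rw [lam'.partAt_of_lt (by omega), hb0]
    have := lam.le_partAt (k := (a : ℕ) + 1) (by omega)
    omega
  · have hrow : n + 1 - (b + 1) + 1 = ((⟨n - b, by omega⟩ : Fin n) : ℕ) + 1 := by
      simp only; omega
    rw [hrow, lam'.partAt_val_add_one, h]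
    simp only
    rw [show n + 2 - (n - b + 1) = b + 1 by omega, Nat.lt_iff_add_one_le,
      ← Partition.sInf_rowsAtLeast_le_iff hle (by omega) (by omega)]
    omega

theorem isOnBoard_antidiagTranspose_iff (h : IsConjugate lam lam') (hle : ∀ i, lam.part i ≤ n + 1)
    (σ : Perm (Fin (n + 1))) : IsOnBoard lam' (antidiagTranspose σ) ↔ IsOnBoard lam σ := by
  refine ((σ.trans Fin.revPerm).forall_congr fun a => ?_).symm
  simp [antidiagTranspose_apply, h.lt_partAt_iff hle a (σ a)]

end IsConjugate

variable {n : ℕ} {lam : Partition n}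

theorem isOnBoard_iff {σ : Perm (Fin (n + 1))} :
    IsOnBoard lam σ ↔ ∀ i : Fin n, (σ i.castSucc : ℕ) < lam.part i := by
  simp only [IsOnBoard, Fin.forall_fin_succ', Fin.val_castSucc, Partition.partAt_val_add_one,
    Fin.val_last, lam.partAt_of_lt (Nat.lt_succ_self n), Fin.is_lt, and_true]

@[ext]
theorem Placement.ext {x y : Placement lam} (h : x.col = y.col) : x = y := by
  cases x; cases y; congr

def Placement.ofPerm (σ : Perm (Fin (n + 1))) (hσ : IsOnBoard lam σ) : Placement lam where
  col i := σ i.castSucc + 1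
  inj _ _ hij := Fin.castSucc_injective n (σ.injective (Fin.ext (by simpa using hij)))
  pos _ := Nat.le_add_left 1 _
  le_part i := isOnBoard_iff.mp hσ i

def Placement.toEmbedding (hle : ∀ i, lam.part i ≤ n + 1) (x : Placement lam) :
    Fin n ↪ Fin (n + 1) where
  toFun i := ⟨x.col i - 1, by have := x.le_part i; have := hle i; omega⟩
  inj' i j hij := x.inj <| by
    have := x.pos i; have := x.pos j
    simp only [Fin.mk.injEq] at hij
    omega

@[simp]
theorem Placement.val_toEmbedding (hle : ∀ i, lam.part i ≤ n + 1) (x : Placement lam)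
    (i : Fin n) : (x.toEmbedding hle i : ℕ) = x.col i - 1 := rfl

noncomputable def placementEquiv (hle : ∀ i, lam.part i ≤ n + 1) :
    Placement lam ≃ {σ // IsOnBoard lam σ} where
  toFun x := ⟨(restrictCastSucc n).symm (x.toEmbedding hle), isOnBoard_iff.mpr fun i => by
    have := x.le_part i
    have := x.pos i
    simp only [← restrictCastSucc_apply, apply_symm_apply, Placement.val_toEmbedding]
    omega⟩
  invFun σ := Placement.ofPerm σ.1 σ.2
  left_inv x := by
    ext i
    simp only [Placement.ofPerm, ← restrictCastSucc_apply, apply_symm_apply,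
      Placement.val_toEmbedding]
    have := x.pos i
    omega
  right_inv σ := Subtype.ext <| (restrictCastSucc n).injective <| by
    ext i
    simp [Placement.ofPerm]

theorem lowCount_min_eq (σ : Perm (Fin (n + 1))) (j m : ℕ) :
    lowCount σ (min j n) m = #{i : Fin n | (i : ℕ) < j ∧ (σ i.castSucc : ℕ) < m} := by
  unfold lowCount
  rw [card_filter, Fin.sum_univ_castSucc, card_filter]
  simp

theorem rankLE_iff_castSucc {σ τ : Perm (Fin (n + 1))} :
    RankLE σ τ ↔ ∀ j m, #{i : Fin n | (i : ℕ) < j ∧ (τ i.castSucc : ℕ) < m} ≤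
      #{i : Fin n | (i : ℕ) < j ∧ (σ i.castSucc : ℕ) < m} := by
  refine ⟨fun h j m => ?_, fun h j m => ?_⟩
  · simpa only [lowCount_min_eq] using h (min j n) m
  · by_cases hj : j ≤ n
    · simpa only [← lowCount_min_eq, min_eq_left hj] using h j m
    · rw [lowCount_of_le σ (by omega), lowCount_of_le τ (by omega)]

theorem rle_ofPerm_iff {σ τ : Perm (Fin (n + 1))} (hσ : IsOnBoard lam σ) (hτ : IsOnBoard lam τ) :
    rle (Placement.ofPerm σ hσ) (Placement.ofPerm τ hτ) ↔ RankLE σ τ := by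
  rw [rankLE_iff_castSucc]
  refine forall_congr' fun j => ?_
  rw [forall₂_initSeg_iff (Placement.inj _) (Placement.inj _)]
  simp only [Placement.ofPerm, Nat.add_one_le_iff]

theorem rle_iff_rankLE (hle : ∀ i, lam.part i ≤ n + 1) (x y : Placement lam) :
    rle x y ↔ RankLE (placementEquiv hle x).1 (placementEquiv hle y).1 := by
  conv_lhs =>
    rw [← (placementEquiv hle).symm_apply_apply x, ← (placementEquiv hle).symm_apply_apply y]
  exact rle_ofPerm_iff (placementEquiv hle x).2 (placementEquiv hle y).2

theorem rookIso_conjugate_general {n : ℕ} (lam lam' : Partition n)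
    (hlast : lam.partAt n = n + 1)
    (hconj : ∀ i : Fin n, lam'.part i =
      n + 2 - sInf {k : ℕ | 1 ≤ k ∧ n + 2 - ((i : ℕ) + 1) ≤ lam.partAt k}) :
    RookIso lam lam' := by
  have hle := lam.part_le_of_partAt hlast
  have hconj : IsConjugate lam lam' := hconj
  let transpose : {σ // IsOnBoard lam σ} ≃ {σ // IsOnBoard lam' σ} :=
    antidiagTranspose_involutive.toPerm.subtypeEquiv fun σ =>
      (hconj.isOnBoard_antidiagTranspose_iff hle σ).symm
  refine ⟨(placementEquiv hle).trans (transpose.trans (placementEquiv hconj.part_le).symm),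
    fun x y => ?_⟩
  simp only [rle_iff_rankLE hle, rle_iff_rankLE hconj.part_le, Equiv.trans_apply,
    Equiv.apply_symm_apply]
  exact rankLE_antidiagTranspose_iff.symm

/-- If `λ` has `n` parts with `λ_n = n + 1` and `λ'` is its conjugate,
given by `λ'_i = n + 2 - min {k | λ_k ≥ n + 2 - i}` (with the convention `λ_{n+1} = n + 1`),
then the rook posets of `λ` and `λ'` are isomorphic. -/
theorem rookIso_conjugate {n : ℕ} (hn : 0 < n) (lam lam' : Partition n)
    (hlast : lam.partAt n = n + 1)
    (hconj : ∀ i : Fin n, lam'.part i =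
      n + 2 - sInf {k : ℕ | 1 ≤ k ∧ n + 2 - ((i : ℕ) + 1) ≤ lam.partAt k}) :
    RookIso lam lam' :=
  rookIso_conjugate_general lam lam' hlast hconj

end RookPoset
end

section
/- Let λ be a partition. For x ∈ P_λ define r(x) to be the number of inversions of the completed permutation σ_x. Then r is a rank function on the rook poset P_λ: r(0̂) = 0 where 0̂ = (1, 2, …, n) is the minimum of P_λ, and whenever y covers x in P_λ, one has r(y) = r(x) + 1. -/
namespace RookPoset

/-!
Compare `r` with the weight `ρ(x) = ∑ xᵢ + inv(x₁, …, xₙ)`. The tail of `σ_x` is increasing and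
`σ_x` permutes `{1, …, λₙ}`, so the inversions of `σ_x` starting at position `i ≤ n` number
`xᵢ - 1 - #{k < i | x_k < xᵢ}`; summing gives `r(x) + n(n+1)/2 = ρ(x)`.

The order `x ≤ y` says that every prefix of `y` has at most as many rooks in columns `≤ w` as the
same prefix of `x`. If `x < y`, let `a` be the first row where they differ; then `xₐ < yₐ`. If some
later row of `y` has its rook in `[xₐ, yₐ)`, switching the rook of row `a` with the first such one
gives `z`; otherwise pushing the rook of row `a` to the largest free column in `[xₐ, yₐ)` does.
In both cases `x ≤ z < y` and `ρ(z) = ρ(y) - 1`, so when `y` covers `x` we get `z = x`.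
-/

open Finset

theorem forall₂_le_iff_countP_le {α : Type*} [LinearOrder α] :
    ∀ {L L' : List α}, L.Pairwise (· ≤ ·) → L'.Pairwise (· ≤ ·) → L.length = L'.length →
      (List.Forall₂ (· ≤ ·) L L' ↔ ∀ w, L'.countP (· ≤ w) ≤ L.countP (· ≤ w))
  | [], [], _, _, _ => by simp
  | a :: l, b :: l', hL, hL', hlen => by
    have ih := forall₂_le_iff_countP_le hL.of_cons hL'.of_cons (Nat.succ_inj.mp hlen)
    simp only [List.forall₂_cons, ih, List.countP_cons, decide_eq_true_eq]
    constructor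
    · rintro ⟨hab, hcount⟩ w
      have := hcount w
      split_ifs with hbw haw <;> first | omega | exact absurd (hab.trans hbw) haw
    · intro hcount
      have hab : a ≤ b := by
        by_contra! hba
        have hl : l.countP (· ≤ b) = 0 :=
          List.countP_eq_zero.mpr fun e he => by
            simpa using hba.trans_le ((List.pairwise_cons.mp hL).1 e he)
        simpa [hl, not_le.mpr hba] using hcount b
      refine ⟨hab, fun w => ?_⟩
      by_cases hbw : b ≤ w
      · simpa [hbw, hab.trans hbw] using hcount w
      · have hl' : l'.countP (· ≤ w) = 0 :=
          List.countP_eq_zero.mpr fun e he => by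
            simpa using (not_le.mp hbw).trans_le ((List.pairwise_cons.mp hL').1 e he)
        omega

variable {n : ℕ}

def prefixCount (f : Fin n → ℕ) (j w : ℕ) : ℕ := #{i : Fin n | (i : ℕ) < j ∧ f i ≤ w}

theorem countP_initSeg {f : Fin n → ℕ} (hf : Function.Injective f) (j w : ℕ) :
    (initSeg f j).countP (· ≤ w) = prefixCount f j w := by
  rw [initSeg, ← Multiset.coe_countP, Finset.sort_eq, Multiset.countP_eq_card_filter,
    ← Finset.filter_val, ← Finset.card_def, filter_image, card_image_of_injective _ hf,
    filter_filter, prefixCount]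

theorem rle_iff_prefixCount {lam : Partition n} {x y : Placement lam} :
    rle x y ↔ ∀ j w, prefixCount y.col j w ≤ prefixCount x.col j w := by
  refine forall_congr' fun j => ?_
  rw [forall₂_le_iff_countP_le (L := initSeg x.col j) (L' := initSeg y.col j)
    (Finset.pairwise_sort _ _) (Finset.pairwise_sort _ _)
    (by simp only [initSeg, length_sort, card_image_of_injective _ x.inj,
      card_image_of_injective _ y.inj])]
  simp only [countP_initSeg x.inj, countP_initSeg y.inj]

theorem prefixCount_congr {f g : Fin n → ℕ} {j : ℕ} (h : ∀ i : Fin n, (i : ℕ) < j → f i = g i)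
    (w : ℕ) : prefixCount f j w = prefixCount g j w := by
  unfold prefixCount
  congr 1
  exact filter_congr fun i _ => and_congr_right fun hi => by rw [h i hi]

theorem prefixCount_update (f : Fin n → ℕ) (a : Fin n) (c j w : ℕ) :
    prefixCount (Function.update f a c) j w + (if (a : ℕ) < j ∧ f a ≤ w then 1 else 0) =
      prefixCount f j w + (if (a : ℕ) < j ∧ c ≤ w then 1 else 0) := by
  have split (g : Fin n → ℕ) : prefixCount g j w = (if (a : ℕ) < j ∧ g a ≤ w then 1 else 0) +
      ∑ i ∈ univ.erase a, if (i : ℕ) < j ∧ g i ≤ w then 1 else 0 := by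
    rw [prefixCount, card_filter, ← add_sum_erase _ _ (mem_univ a)]
  have off : ∀ i ∈ univ.erase a, Function.update f a c i = f i :=
    fun i hi => Function.update_of_ne (ne_of_mem_erase hi) _ _
  rw [split, split f, sum_congr rfl fun i hi => by rw [off i hi], Function.update_self]
  omega

theorem prefixCount_comp_swap (f : Fin n → ℕ) (a b : Fin n) (j w : ℕ) :
    prefixCount (f ∘ Equiv.swap a b) j w + (if (a : ℕ) < j ∧ f a ≤ w then 1 else 0) +
        (if (b : ℕ) < j ∧ f b ≤ w then 1 else 0) =
      prefixCount f j w + (if (a : ℕ) < j ∧ f b ≤ w then 1 else 0) +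
        (if (b : ℕ) < j ∧ f a ≤ w then 1 else 0) := by
  rcases eq_or_ne a b with rfl | hab
  · simp
  have e₁ := prefixCount_update (Function.update f b (f a)) a (f b) j w
  have e₂ := prefixCount_update f b (f a) j w
  rw [Function.update_of_ne hab] at e₁
  rw [Equiv.comp_swap_eq_update]
  omega

theorem prefixCount_eq_of_lt (f : Fin n → ℕ) {a : Fin n} {j : ℕ} (hj : (a : ℕ) < j) (w : ℕ) :
    prefixCount f j w = prefixCount f a w + (if f a ≤ w then 1 else 0) +
      #{i : Fin n | a < i ∧ (i : ℕ) < j ∧ f i ≤ w} := by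
  have hrow : (if f a ≤ w then 1 else 0) = ∑ i, if i = a ∧ f i ≤ w then 1 else 0 := by
    simp [ite_and]
  simp only [prefixCount, card_filter, hrow, ← sum_add_distrib]
  refine sum_congr rfl fun i _ => ?_
  simp only [Fin.lt_def, Fin.ext_iff]
  split_ifs <;> omega

-- Row `a` counts for `f` but not for `g`, and by comparing with the counts at `f a - 1`, the rows
-- between `a` and `j` contribute no more to `g` than to `f`.
theorem prefixCount_lt_of_first_diff {f g : Fin n → ℕ} {a : Fin n}
    (hfg : ∀ j w, prefixCount g j w ≤ prefixCount f j w)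
    (hbelow : ∀ i : Fin n, i < a → f i = g i) {j w : ℕ} (hj : (a : ℕ) < j)
    (hfa : f a ≤ w) (hga : w < g a)
    (hmid : ∀ i : Fin n, a < i → (i : ℕ) < j → g i ≤ w → g i < f a) (hpos : 0 < f a) :
    prefixCount g j w < prefixCount f j w := by
  have hprefix (v : ℕ) : prefixCount f a v = prefixCount g a v :=
    prefixCount_congr (fun i hi => hbelow i (Fin.lt_def.mpr hi)) v
  have hgmid : #{i : Fin n | a < i ∧ (i : ℕ) < j ∧ g i ≤ w} =
      #{i : Fin n | a < i ∧ (i : ℕ) < j ∧ g i ≤ f a - 1} := by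
    congr 1
    refine filter_congr fun i _ => ⟨fun ⟨h1, h2, h3⟩ => ⟨h1, h2, ?_⟩, fun ⟨h1, h2, h3⟩ =>
      ⟨h1, h2, by omega⟩⟩
    have := hmid i h1 h2 h3
    omega
  have hfmid : #{i : Fin n | a < i ∧ (i : ℕ) < j ∧ f i ≤ f a - 1} ≤
      #{i : Fin n | a < i ∧ (i : ℕ) < j ∧ f i ≤ w} :=
    card_le_card fun i hi => by
      simp only [mem_filter] at hi ⊢
      exact ⟨hi.1, hi.2.1, hi.2.2.1, by omega⟩
  have := hfg j (f a - 1)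
  rw [prefixCount_eq_of_lt f hj, prefixCount_eq_of_lt g hj, hprefix, if_neg (by omega),
    if_neg (by omega)] at this
  rw [prefixCount_eq_of_lt f hj, prefixCount_eq_of_lt g hj, hprefix, if_pos hfa,
    if_neg (by omega), hgmid]
  omega

section Inversions

variable {ι : Type*} [Fintype ι] [LinearOrder ι]

def inversions (f : ι → ℕ) : ℕ := #{p : ι × ι | p.1 < p.2 ∧ f p.2 < f p.1}

theorem inversions_eq_zero_of_strictMono {f : ι → ℕ} (hf : StrictMono f) : inversions f = 0 :=
  card_eq_zero.mpr (filter_eq_empty_iff.mpr fun _ _ h => (hf h.1).not_gt h.2)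

theorem inversions_update_add (f : ι → ℕ) (a : ι) {c : ℕ} (hc : c ≤ f a) :
    inversions (Function.update f a c) + #{k | a < k ∧ c ≤ f k ∧ f k < f a} =
      inversions f + #{i | i < a ∧ c < f i ∧ f i ≤ f a} := by
  have hfst : #{k | a < k ∧ c ≤ f k ∧ f k < f a} =
      #{p : ι × ι | p.1 = a ∧ a < p.2 ∧ c ≤ f p.2 ∧ f p.2 < f a} := by
    rw [show (univ.filter fun p : ι × ι => p.1 = a ∧ a < p.2 ∧ c ≤ f p.2 ∧ f p.2 < f a) =
      {a} ×ˢ univ.filter fun k => a < k ∧ c ≤ f k ∧ f k < f a by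
        ext ⟨i, k⟩; simp only [mem_filter, mem_product, mem_singleton, mem_univ, true_and],
      card_product,
      card_singleton, one_mul]
  have hsnd : #{i | i < a ∧ c < f i ∧ f i ≤ f a} =
      #{p : ι × ι | p.2 = a ∧ p.1 < a ∧ c < f p.1 ∧ f p.1 ≤ f a} := by
    rw [show (univ.filter fun p : ι × ι => p.2 = a ∧ p.1 < a ∧ c < f p.1 ∧ f p.1 ≤ f a) =
      (univ.filter fun i => i < a ∧ c < f i ∧ f i ≤ f a) ×ˢ {a} by
        ext ⟨i, k⟩; simp only [mem_filter, mem_product, mem_singleton, mem_univ, true_and]; tauto,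
      card_product, card_singleton, mul_one]
  rw [hfst, hsnd, inversions, inversions]
  simp only [card_filter, ← sum_add_distrib]
  refine sum_congr rfl fun p _ => ?_
  obtain ⟨i, k⟩ := p
  simp only [Function.update_apply]
  split_ifs <;> grind

theorem inversions_comp_swap (f : ι → ℕ) {a b : ι} (hab : a < b) (hba : f b < f a)
    (hrect : ∀ r, a ≤ r → r ≤ b → f b ≤ f r → f r ≤ f a → r = a ∨ r = b) :
    inversions f = inversions (f ∘ Equiv.swap a b) + 1 := by
  set g := f ∘ Equiv.swap a b
  have hga : g a = f b := by simp [g]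
  have hgb : g b = f a := by simp [g]
  have hg (r) (hra : r ≠ a) (hrb : r ≠ b) : g r = f r := by
    simp [g, Equiv.swap_apply_of_ne_of_ne hra hrb]
  have hmid : Function.update f a (f b) = Function.update g b (f b) := by
    funext r
    by_cases hra : r = a
    · subst hra; simp [hab.ne, hga]
    by_cases hrb : r = b
    · subst hrb; simp [hab.ne']
    simp [hra, hrb, hg]
  have e₁ := inversions_update_add f a hba.le
  have e₂ := inversions_update_add g b (c := f b) (by rw [hgb]; exact hba.le)
  have hright : #{k | a < k ∧ f b ≤ f k ∧ f k < f a} =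
      #{k | b < k ∧ f b ≤ g k ∧ g k < g b} + 1 := by
    rw [← card_insert_of_notMem (s := univ.filter _) (a := b) (by simp)]
    congr 1
    ext k
    simp only [mem_filter, mem_univ, true_and, mem_insert, hgb]
    constructor
    · rintro ⟨hak, h₁, h₂⟩
      rcases lt_or_ge b k with hbk | hkb
      · exact Or.inr ⟨hbk, by rwa [hg k hak.ne' hbk.ne'], by rwa [hg k hak.ne' hbk.ne']⟩
      · exact Or.inl ((hrect k hak.le hkb h₁ h₂.le).resolve_left hak.ne')
    · rintro (rfl | ⟨hbk, h₁, h₂⟩)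
      · exact ⟨hab, le_rfl, hba⟩
      · rw [hg k (hab.trans hbk).ne' hbk.ne'] at h₁ h₂
        exact ⟨hab.trans hbk, h₁, h₂⟩
  have hleft : #{i | i < b ∧ f b < g i ∧ g i ≤ g b} = #{i | i < a ∧ f b < f i ∧ f i ≤ f a} := by
    congr 1
    ext i
    simp only [mem_filter, mem_univ, true_and, hgb]
    constructor
    · rintro ⟨hib, h₁, h₂⟩
      rcases lt_trichotomy i a with hia | rfl | hai
      · rw [hg i hia.ne hib.ne] at h₁ h₂
        exact ⟨hia, h₁, h₂⟩
      · rw [hga] at h₁; exact absurd h₁ (lt_irrefl _)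
      · rw [hg i hai.ne' hib.ne] at h₁ h₂
        rcases hrect i hai.le hib.le h₁.le h₂ with rfl | rfl
        exacts [absurd hai (lt_irrefl _), absurd hib (lt_irrefl _)]
    · rintro ⟨hia, h₁, h₂⟩
      rw [hg i hia.ne (hia.trans hab).ne]
      exact ⟨hia.trans hab, h₁, h₂⟩
  rw [hmid] at e₁
  omega

theorem inversions_update_of_fill {f : ι → ℕ} (hf : Function.Injective f) {a : ι} {c : ℕ}
    (hca : c < f a) (hfree : ∀ r, f r ≠ c) (hfill : ∀ d, c < d → d < f a → ∃ r < a, f r = d) :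
    inversions (Function.update f a c) = inversions f + (f a - c - 1) := by
  have e := inversions_update_add f a hca.le
  have hright : #{k | a < k ∧ c ≤ f k ∧ f k < f a} = 0 := by
    refine card_eq_zero.mpr (filter_eq_empty_iff.mpr fun k _ ⟨hak, h₁, h₂⟩ => ?_)
    obtain ⟨r, hra, hr⟩ := hfill (f k) (lt_of_le_of_ne h₁ (hfree k).symm) h₂
    exact (hra.trans hak).ne (hf hr)
  have hleft : #{i | i < a ∧ c < f i ∧ f i ≤ f a} = f a - c - 1 := by
    rw [← Nat.card_Ioo, ← card_image_of_injective _ hf]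
    congr 1
    ext d
    simp only [mem_image, mem_filter, mem_univ, true_and, mem_Ioo]
    constructor
    · rintro ⟨i, ⟨hia, h₁, h₂⟩, rfl⟩
      exact ⟨h₁, lt_of_le_of_ne h₂ (hf.ne hia.ne)⟩
    · rintro ⟨h₁, h₂⟩
      obtain ⟨r, hra, rfl⟩ := hfill d h₁ h₂
      exact ⟨r, ⟨hra, h₁, h₂.le⟩, rfl⟩
  omega

theorem sum_card_lt_add_inversions {f : ι → ℕ} (hf : Function.Injective f) :
    ∑ i, #{k | k < i ∧ f k < f i} + inversions f = ∑ i : ι, #{k | k < i} := by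
  have hinv : inversions f = ∑ i, #{k | k < i ∧ f i < f k} := by
    rw [inversions, card_filter, Fintype.sum_prod_type_right]
    simp only [card_filter]
  rw [hinv, ← sum_add_distrib]
  refine sum_congr rfl fun i _ => ?_
  rw [← card_filter_add_card_filter_not (s := univ.filter (· < i)) (fun k : ι => f k < f i),
    filter_filter, filter_filter]
  congr 2
  ext k
  simp only [mem_filter, mem_univ, true_and, not_lt, and_congr_right_iff]
  intro hki
  have := hf.ne hki.ne'
  omega

def weight (f : ι → ℕ) : ℕ := ∑ i, f i + inversions f

theorem weight_comp_swap (f : ι → ℕ) {a b : ι} (hab : a < b) (hba : f b < f a)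
    (hrect : ∀ r, a ≤ r → r ≤ b → f b ≤ f r → f r ≤ f a → r = a ∨ r = b) :
    weight f = weight (f ∘ Equiv.swap a b) + 1 := by
  rw [weight, weight, inversions_comp_swap f hab hba hrect, Function.comp_def,
    Equiv.sum_comp (Equiv.swap a b) f, add_assoc]

theorem weight_update_of_fill {f : ι → ℕ} (hf : Function.Injective f) {a : ι} {c : ℕ}
    (hca : c < f a) (hfree : ∀ r, f r ≠ c) (hfill : ∀ d, c < d → d < f a → ∃ r < a, f r = d) :
    weight f = weight (Function.update f a c) + 1 := by
  rw [weight, weight, inversions_update_of_fill hf hca hfree hfill,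
    sum_update_of_mem (mem_univ a), sum_eq_add_sum_sdiff_singleton_of_mem (mem_univ a)]
  omega

end Inversions

theorem Partition.part_le_maxPart (lam : Partition n) (i : Fin n) : lam.part i ≤ lam.maxPart :=
  le_sup (mem_univ i)

theorem Partition.le_maxPart (lam : Partition n) : n ≤ lam.maxPart := by
  cases n with
  | zero => exact Nat.zero_le _
  | succ m =>
    have := lam.staircase (Fin.last m)
    have := lam.part_le_maxPart (Fin.last m)
    simp only [Fin.val_last] at *
    omega

theorem sum_Icc_one_eq_sum_fin {M : Type*} [AddCommMonoid M] (F : ℕ → M) :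
    ∑ p ∈ Icc 1 n, F p = ∑ i : Fin n, F (i + 1) := by
  rw [Fin.sum_univ_eq_sum_range (fun i => F (i + 1)), range_eq_Ico, sum_Ico_add',
    zero_add, Ico_add_one_right_eq_Icc]

namespace Placement

variable {lam : Partition n} (x : Placement lam)

def freeCols : Finset ℕ := Icc 1 lam.maxPart \ univ.image x.col

theorem col_mem_Icc (i : Fin n) : x.col i ∈ Icc 1 lam.maxPart :=
  mem_Icc.mpr ⟨x.pos i, (x.le_part i).trans (lam.part_le_maxPart i)⟩

theorem length_sort_freeCols : (x.freeCols.sort (· ≤ ·)).length = lam.maxPart - n := by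
  rw [length_sort, freeCols, card_sdiff_of_subset, Nat.card_Icc, card_image_of_injective _ x.inj,
    card_univ, Fintype.card_fin, Nat.add_sub_cancel]
  exact image_subset_iff.mpr fun i _ => x.col_mem_Icc i

theorem sigma_of_le {p : ℕ} (h₁ : 1 ≤ p) (h₂ : p ≤ n) :
    x.sigma p = x.col ⟨p - 1, by omega⟩ := by
  rw [sigma, dif_pos ⟨h₁, h₂⟩]

theorem sigma_succ (i : Fin n) : x.sigma (i + 1) = x.col i := by
  rw [sigma_of_le x (by omega) (by omega)]
  rfl

theorem sigma_of_lt {p : ℕ} (h : n < p) :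
    x.sigma p = (x.freeCols.sort (· ≤ ·)).getD (p - n - 1) 0 := by
  rw [sigma, dif_neg (by omega)]
  rfl

theorem sigma_mem_freeCols {p : ℕ} (h₁ : n < p) (h₂ : p ≤ lam.maxPart) :
    x.sigma p ∈ x.freeCols := by
  have hp : p - n - 1 < (x.freeCols.sort (· ≤ ·)).length := by
    rw [length_sort_freeCols]; omega
  rw [sigma_of_lt x h₁, List.getD_eq_getElem _ _ hp, ← mem_sort (· ≤ ·)]
  exact List.getElem_mem hp

theorem strictMonoOn_sigma : StrictMonoOn x.sigma (Set.Ioc n lam.maxPart) := by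
  intro p ⟨hp₁, hp₂⟩ q ⟨hq₁, hq₂⟩ hpq
  have hlen := x.length_sort_freeCols
  rw [sigma_of_lt x hp₁, sigma_of_lt x hq₁, List.getD_eq_getElem _ _ (by omega),
    List.getD_eq_getElem _ _ (by omega)]
  exact (sortedLT_sort _).getElem_lt_getElem_of_lt (by omega)

theorem injOn_sigma : Set.InjOn x.sigma (Icc 1 lam.maxPart) := by
  have hhead {p : ℕ} (h₁ : 1 ≤ p) (h₂ : p ≤ n) : x.sigma p ∉ x.freeCols := by
    simp [freeCols, sigma_of_le x h₁ h₂]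
  intro p hp q hq hpq
  simp only [coe_Icc, Set.mem_Icc] at hp hq
  rcases le_or_gt p n with hpn | hpn <;> rcases le_or_gt q n with hqn | hqn
  · rw [sigma_of_le x hp.1 hpn, sigma_of_le x hq.1 hqn] at hpq
    have := Fin.mk.inj_iff.mp (x.inj hpq)
    omega
  · exact absurd (hpq ▸ x.sigma_mem_freeCols hqn hq.2) (hhead hp.1 hpn)
  · exact absurd (hpq ▸ x.sigma_mem_freeCols hpn hp.2) (hhead hq.1 hqn)
  · exact x.strictMonoOn_sigma.injOn ⟨hpn, hp.2⟩ ⟨hqn, hq.2⟩ hpq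

theorem image_sigma : (Icc 1 lam.maxPart).image x.sigma = Icc 1 lam.maxPart := by
  refine eq_of_subset_of_card_le (fun v hv => ?_) (card_image_of_injOn x.injOn_sigma).ge
  obtain ⟨p, hp, rfl⟩ := mem_image.mp hv
  simp only [mem_Icc] at hp
  rcases le_or_gt p n with hpn | hpn
  · rw [sigma_of_le x hp.1 hpn]; exact x.col_mem_Icc _
  · exact (mem_sdiff.mp (x.sigma_mem_freeCols hpn hp.2)).1

theorem card_sigma_lt {v : ℕ} (hv : v ≤ lam.maxPart + 1) :
    #{q ∈ Icc 1 lam.maxPart | x.sigma q < v} = v - 1 := by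
  have h := congrArg (filter (· < v)) x.image_sigma
  rw [filter_image] at h
  rw [← card_image_of_injOn (x.injOn_sigma.mono (coe_subset.mpr (filter_subset _ _))), h,
    ← Nat.card_Ico 1 v]
  congr 1
  ext q
  simp only [mem_filter, mem_Icc, mem_Ico]
  omega

theorem rank_eq_sum :
    x.rank = ∑ i : Fin n, #{q ∈ Icc 1 lam.maxPart | (i : ℕ) + 1 < q ∧ x.sigma q < x.col i} := by
  have htail : ∀ p ∈ Icc 1 lam.maxPart, p ∉ Icc 1 n →
      #{q ∈ Icc 1 lam.maxPart | p < q ∧ x.sigma q < x.sigma p} = 0 := by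
    intro p hp hpn
    simp only [mem_Icc, not_and, not_le] at hp hpn
    refine card_eq_zero.mpr (filter_eq_empty_iff.mpr fun q hq ⟨hpq, hσ⟩ => ?_)
    have := x.strictMonoOn_sigma ⟨hpn hp.1, hp.2⟩ ⟨(hpn hp.1).trans hpq, (mem_Icc.mp hq).2⟩ hpq
    omega
  rw [rank, card_filter, sum_product]
  simp only [sum_boole, Nat.cast_id]
  rw [← sum_subset (Icc_subset_Icc_right lam.le_maxPart) htail, sum_Icc_one_eq_sum_fin]
  simp only [sigma_succ]

theorem card_sigma_lt_col (i : Fin n) :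
    #{q ∈ Icc 1 lam.maxPart | (i : ℕ) + 1 < q ∧ x.sigma q < x.col i} +
      #{k | k < i ∧ x.col k < x.col i} + 1 = x.col i := by
  have htot := x.card_sigma_lt (v := x.col i) (by have := (mem_Icc.mp (x.col_mem_Icc i)).2; omega)
  rw [← card_filter_add_card_filter_not (s := filter _ _) (fun q => (i : ℕ) + 1 < q),
    filter_filter, filter_filter] at htot
  have hbefore : #{q ∈ Icc 1 lam.maxPart | x.sigma q < x.col i ∧ ¬(i : ℕ) + 1 < q} =
      #{k | k < i ∧ x.col k < x.col i} := by
    have hq : (Icc 1 lam.maxPart).filter (fun q => x.sigma q < x.col i ∧ ¬(i : ℕ) + 1 < q) =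
        (Icc 1 n).filter (fun q => q < (i : ℕ) + 1 ∧ x.sigma q < x.col i) := by
      ext q
      simp only [mem_filter, mem_Icc]
      have := lam.le_maxPart
      constructor
      · rintro ⟨⟨hq₁, -⟩, hσ, hqi⟩
        have hne : q ≠ (i : ℕ) + 1 := by rintro rfl; rw [sigma_succ] at hσ; omega
        omega
      · rintro ⟨⟨hq₁, hqn⟩, hqi, hσ⟩
        exact ⟨⟨hq₁, by omega⟩, hσ, by omega⟩
    rw [hq, card_filter, sum_Icc_one_eq_sum_fin, card_filter]
    simp only [sigma_succ, Nat.add_lt_add_iff_right, Fin.val_fin_lt]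
  have hafter : #{q ∈ Icc 1 lam.maxPart | x.sigma q < x.col i ∧ (i : ℕ) + 1 < q} =
      #{q ∈ Icc 1 lam.maxPart | (i : ℕ) + 1 < q ∧ x.sigma q < x.col i} := by
    simp only [and_comm]
  have := x.pos i
  omega

theorem rank_add_sum_eq_weight : x.rank + ∑ i : Fin n, ((i : ℕ) + 1) = weight x.col := by
  have hcols := sum_congr rfl fun i (_ : i ∈ univ) => x.card_sigma_lt_col i
  have hpairs := sum_card_lt_add_inversions x.inj
  simp only [sum_add_distrib, ← x.rank_eq_sum] at hcols
  simp only [filter_gt_eq_Iio, Fin.card_Iio] at hpairs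
  rw [weight, sum_add_distrib, ← hcols, ← hpairs]
  simp only [sum_const, card_univ, Fintype.card_fin, smul_eq_mul, mul_one]
  omega

theorem ext_col {x y : Placement lam} (h : x.col = y.col) : x = y := by
  cases x; cases y; congr

def swapRows (y : Placement lam) {a b : Fin n} (hab : a ≤ b) (hba : y.col b ≤ y.col a) :
    Placement lam where
  col := y.col ∘ Equiv.swap a b
  inj := y.inj.comp (Equiv.swap a b).injective
  pos _ := y.pos _
  le_part i := by
    rcases eq_or_ne i a with rfl | hia
    · simpa using hba.trans (y.le_part i)
    rcases eq_or_ne i b with rfl | hib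
    · simpa using (y.le_part a).trans (lam.mono hab)
    simpa [Equiv.swap_apply_of_ne_of_ne hia hib] using y.le_part i

def moveRook (y : Placement lam) (a : Fin n) {c : ℕ} (hc : 1 ≤ c) (hca : c ≤ y.col a)
    (hfree : ∀ r, y.col r ≠ c) : Placement lam where
  col := Function.update y.col a c
  inj r s h := by
    simp only [Function.update_apply] at h
    split_ifs at h with hr hs hs
    · exact hr.trans hs.symm
    · exact absurd h.symm (hfree s)
    · exact absurd h (hfree r)
    · exact y.inj h
  pos r := by
    rcases eq_or_ne r a with rfl | hra
    · simpa using hc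
    · simpa [hra] using y.pos r
  le_part r := by
    rcases eq_or_ne r a with rfl | hra
    · simpa using hca.trans (y.le_part r)
    · simpa [hra] using y.le_part r

end Placement

section Moves

variable {lam : Partition n} {x y : Placement lam} {a b : Fin n}

theorem SwitchMove.col_eq (h : SwitchMove y x a b) : x.col = y.col ∘ Equiv.swap a b := by
  obtain ⟨-, -, -, ha, hb, hr⟩ := h
  funext r
  rcases eq_or_ne r a with rfl | hra
  · simpa using ha
  rcases eq_or_ne r b with rfl | hrb
  · simpa using hb
  simp [Equiv.swap_apply_of_ne_of_ne hra hrb, hr r hra hrb]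

theorem PushMove.col_eq (h : PushMove y x a) : x.col = Function.update y.col a (x.col a) := by
  obtain ⟨_, -, -, -, -, -, hr⟩ := h
  funext r
  rcases eq_or_ne r a with rfl | hra
  · simp
  · simp [hra, hr r hra]

theorem SwitchMove.weight_eq (h : SwitchMove y x a b) : weight y.col = weight x.col + 1 := by
  rw [h.col_eq]
  exact weight_comp_swap y.col h.1 h.2.1 h.2.2.1

theorem PushMove.weight_eq (h : PushMove y x a) : weight y.col = weight x.col + 1 := by
  rw [h.col_eq]
  obtain ⟨c, -, hc, hfree, hfill, rfl, -⟩ := h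
  exact weight_update_of_fill y.inj hc hfree hfill

theorem MoveOnRow.weight_eq (h : MoveOnRow y x a) : weight y.col = weight x.col + 1 :=
  h.elim (fun ⟨_, h⟩ => h.weight_eq) PushMove.weight_eq

theorem SwitchMove.rle (h : SwitchMove y x a b) : rle x y := by
  rw [rle_iff_prefixCount, h.col_eq]
  intro j w
  have e := prefixCount_comp_swap y.col a b j w
  have hab : (a : ℕ) < b := h.1
  have := h.2.1
  split_ifs at e <;> omega

theorem PushMove.rle (h : PushMove y x a) : rle x y := by
  rw [rle_iff_prefixCount, h.col_eq]
  intro j w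
  have e := prefixCount_update y.col a (x.col a) j w
  obtain ⟨c, -, hc, -, -, rfl, -⟩ := h
  split_ifs at e <;> omega

theorem MoveOnRow.rle (h : MoveOnRow y x a) : rle x y :=
  h.elim (fun ⟨_, h⟩ => h.rle) PushMove.rle

end Moves

section Covers

variable {lam : Partition n} {x y : Placement lam}

theorem exists_first_col_lt (hle : rle x y) (hne : x ≠ y) :
    ∃ a, (∀ i < a, x.col i = y.col i) ∧ x.col a < y.col a := by
  have hdiff : ∃ a, x.col a ≠ y.col a := by
    by_contra! h
    exact hne (Placement.ext_col (funext h))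
  obtain ⟨a, ha, hmin⟩ := wellFounded_lt.has_min {a | x.col a ≠ y.col a} hdiff
  have hbelow : ∀ i < a, x.col i = y.col i := fun i hi => by_contra fun h => hmin i h hi
  refine ⟨a, hbelow, lt_of_le_of_ne ?_ ha⟩
  have hcount := rle_iff_prefixCount.mp hle (a + 1) (y.col a)
  have hnone (f : Fin n → ℕ) : #{r : Fin n | a < r ∧ (r : ℕ) < a + 1 ∧ f r ≤ y.col a} = 0 :=
    card_eq_zero.mpr (filter_eq_empty_iff.mpr fun r _ h => by rw [Fin.lt_def] at h; omega)
  rw [prefixCount_eq_of_lt _ (lt_add_one _), prefixCount_eq_of_lt _ (lt_add_one _), hnone, hnone,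
    prefixCount_congr (fun i hi => hbelow i (Fin.lt_def.mpr hi))] at hcount
  split_ifs at hcount with h <;> omega

theorem exists_switchMove_le {a : Fin n} (hle : rle x y)
    (hbelow : ∀ i < a, x.col i = y.col i) (hswitch : ∃ b, a < b ∧ x.col a ≤ y.col b ∧ y.col b < y.col a) :
    ∃ b z, SwitchMove y z a b ∧ rle x z := by
  obtain ⟨b, ⟨hab, hxb, hba⟩, hmin⟩ := wellFounded_lt.has_min
    {b | a < b ∧ x.col a ≤ y.col b ∧ y.col b < y.col a} hswitch
  have hgap : ∀ r, a < r → r < b → y.col r < x.col a ∨ y.col a ≤ y.col r := by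
    intro r har hrb
    by_contra! h
    exact hmin r ⟨har, h.1, h.2⟩ hrb
  set z := y.swapRows hab.le hba.le
  have hmove : SwitchMove y z a b := by
    refine ⟨hab, hba, fun r har hrb h₁ h₂ => ?_, by simp [z, Placement.swapRows],
      by simp [z, Placement.swapRows], fun r hra hrb => ?_⟩
    · by_contra! hr
      rcases hgap r (lt_of_le_of_ne har hr.1.symm) (lt_of_le_of_ne hrb hr.2) with h | h
      · omega
      · exact hr.1 (y.inj (le_antisymm h₂ h))
    · simp [z, Placement.swapRows, Equiv.swap_apply_of_ne_of_ne hra hrb]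
  refine ⟨b, z, hmove, rle_iff_prefixCount.mpr fun j w => ?_⟩
  have hxy := rle_iff_prefixCount.mp hle j w
  have e := prefixCount_comp_swap y.col a b j w
  rw [← hmove.col_eq] at e
  have hab' : (a : ℕ) < b := hab
  by_cases hstep : (a : ℕ) < j ∧ j ≤ b ∧ y.col b ≤ w ∧ w < y.col a
  · obtain ⟨haj, hjb, hbw, hwa⟩ := hstep
    have := prefixCount_lt_of_first_diff (rle_iff_prefixCount.mp hle) hbelow haj (hxb.trans hbw) hwa
      (fun r har hrj hrw => (hgap r har (Fin.lt_def.mpr (by omega))).resolve_right (by omega))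
      (x.pos a)
    split_ifs at e <;> omega
  · split_ifs at e <;> omega

theorem exists_pushMove_le {a : Fin n} (hle : rle x y)
    (hbelow : ∀ i < a, x.col i = y.col i) (hxa : x.col a < y.col a)
    (hnoswitch : ∀ b, a < b → x.col a ≤ y.col b → y.col a ≤ y.col b) :
    ∃ z, PushMove y z a ∧ rle x z := by
  set S := (Ico (x.col a) (y.col a)).filter fun d => ∀ r, y.col r ≠ d
  have hxS : x.col a ∈ S := by
    refine mem_filter.mpr ⟨mem_Ico.mpr ⟨le_rfl, hxa⟩, fun r hr => ?_⟩
    rcases lt_trichotomy r a with hra | rfl | har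
    · exact hra.ne (x.inj ((hbelow r hra).trans hr))
    · exact hxa.ne' hr
    · exact (hnoswitch r har hr.ge).not_gt (hr ▸ hxa)
  obtain ⟨c, hcS, hcmax⟩ : ∃ c ∈ S, ∀ d ∈ S, d ≤ c :=
    ⟨_, S.max'_mem ⟨_, hxS⟩, fun d hd => S.le_max' d hd⟩
  obtain ⟨hcI, hfree⟩ := mem_filter.mp hcS
  obtain ⟨hxc, hca⟩ := mem_Ico.mp hcI
  have hfill : ∀ d, c < d → d < y.col a → ∃ r < a, y.col r = d := by
    intro d hcd hda
    have : ¬ ∀ r, y.col r ≠ d := fun h =>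
      (hcmax d (mem_filter.mpr ⟨mem_Ico.mpr ⟨by omega, hda⟩, h⟩)).not_gt hcd
    push Not at this
    obtain ⟨r, rfl⟩ := this
    refine ⟨r, lt_of_not_ge fun har => ?_, rfl⟩
    rcases har.eq_or_lt with rfl | har
    · exact hda.ne rfl
    · exact (hnoswitch r har (by omega)).not_gt hda
  set z := y.moveRook a ((x.pos a).trans hxc) hca.le hfree
  have hmove : PushMove y z a :=
    ⟨c, (x.pos a).trans hxc, hca, hfree, hfill, by simp [z, Placement.moveRook],
      fun r hr => by simp [z, Placement.moveRook, hr]⟩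
  refine ⟨z, hmove, rle_iff_prefixCount.mpr fun j w => ?_⟩
  have hxy := rle_iff_prefixCount.mp hle j w
  have e := prefixCount_update y.col a c j w
  have hza : z.col a = c := by simp [z, Placement.moveRook]
  rw [← hza, ← hmove.col_eq, hza] at e
  by_cases hstep : (a : ℕ) < j ∧ c ≤ w ∧ w < y.col a
  · obtain ⟨haj, hcw, hwa⟩ := hstep
    have := prefixCount_lt_of_first_diff (rle_iff_prefixCount.mp hle) hbelow haj
      (hxc.trans hcw) hwa (fun r har _ hrw => lt_of_not_ge fun h => (hnoswitch r har h).not_gt (by omega)) (x.pos a)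
    split_ifs at e <;> omega
  · split_ifs at e <;> omega

theorem exists_moveOnRow_le (hle : rle x y) (hne : x ≠ y) :
    ∃ z a, MoveOnRow y z a ∧ rle x z := by
  obtain ⟨a, hbelow, hxa⟩ := exists_first_col_lt hle hne
  by_cases hswitch : ∃ b, a < b ∧ x.col a ≤ y.col b ∧ y.col b < y.col a
  · obtain ⟨b, z, hmove, hxz⟩ := exists_switchMove_le hle hbelow hswitch
    exact ⟨z, a, Or.inl ⟨b, hmove⟩, hxz⟩
  · push Not at hswitch
    obtain ⟨z, hmove, hxz⟩ := exists_pushMove_le hle hbelow hxa hswitch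
    exact ⟨z, a, Or.inr hmove, hxz⟩

theorem weight_eq_of_rcovers (h : rcovers x y) : weight y.col = weight x.col + 1 := by
  obtain ⟨hle, hne, hmin⟩ := h
  obtain ⟨z, a, hmove, hxz⟩ := exists_moveOnRow_le hle hne
  rcases hmin z hxz hmove.rle with rfl | rfl
  · exact hmove.weight_eq
  · have := hmove.weight_eq
    omega

end Covers

/-- The inversion count of the completed permutation is a rank function on
the rook poset: it is `0` on the minimum `(1, 2, …, n)` and increases by exactly `1` along
covering relations. -/
theorem rank_is_grading {n : ℕ} (lam : Partition n) :
    (∀ b : Placement lam, (∀ i : Fin n, b.col i = (i : ℕ) + 1) → b.rank = 0) ∧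
    (∀ x y : Placement lam, rcovers x y → y.rank = x.rank + 1) := by
  refine ⟨fun b hb => ?_, fun x y h => ?_⟩
  · have hmono : StrictMono b.col := fun i k hik => by
      rw [hb, hb]; exact Nat.succ_lt_succ hik
    have := b.rank_add_sum_eq_weight
    rw [weight, inversions_eq_zero_of_strictMono hmono, sum_congr rfl fun i _ => hb i] at this
    omega
  · have hx := x.rank_add_sum_eq_weight
    have hy := y.rank_add_sum_eq_weight
    have := weight_eq_of_rcovers h
    omega

end RookPoset
end

section
/- Let λ¹ and λ² be partitions and let λ be a partition whose GJW sequence is the concatenation of the GJW sequence of λ¹, a single entry 0, and the GJW sequence of λ². Then the rook poset P_λ is isomorphic to the product poset P_{λ¹} × P_{λ²}. -/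
namespace RookPoset

/-!
A zero in position `n₁ + 1` of the GJW sequence means `λ_{n₁+1} = n₁ + 1`. As the parts increase,
the lowest `n₁ + 1` rows of the board lie in the columns `1, …, n₁ + 1`, so every maximal rook
placement fills exactly these columns with them and puts all higher rooks further right. A
placement therefore splits into a placement on `λ¹` (the lowest `n₁` rows; the rook of row
`n₁ + 1` is forced into the one column they leave free) and a placement on `λ²` (the rows above,
shifted left by `n₁ + 1`). The sorted initial segments split the same way: up to row `n₁` they are
those of the `λ¹`-part, and at row `n₁ + 1 + k` they are `1, …, n₁ + 1` followed by the shifted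
length-`k` segment of the `λ²`-part. Hence the rook order is the product order.
-/

attribute [ext] Placement

end RookPoset

theorem Finset.sort_union_of_forall_lt {α : Type*} [LinearOrder α] {A B : Finset α}
    (h : ∀ a ∈ A, ∀ b ∈ B, a < b) : (A ∪ B).sort = A.sort ++ B.sort := by
  have hAB : A ∪ B = (A.sort ++ B.sort).toFinset := by simp [List.toFinset_append]
  rw [hAB, List.toFinset_sort]
  · simpa [List.pairwise_append] using fun a ha b hb => (h a ha b hb).le
  · simpa [List.nodup_append] using fun a ha b hb => (h a ha b hb).ne

theorem List.forall₂_append_left_iff {α : Type*} {R : α → α → Prop} [Std.Refl R]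
    (l : List α) {a b : List α} : Forall₂ R (l ++ a) (l ++ b) ↔ Forall₂ R a b := by
  refine ⟨fun h => by simpa using List.forall₂_drop l.length h, fun h => ?_⟩
  exact List.rel_append (List.forall₂_same.2 fun x _ => refl x) h

theorem List.forall₂_le_map_add_right_iff {a b : List ℕ} (c : ℕ) :
    Forall₂ (· ≤ ·) (a.map (· + c)) (b.map (· + c)) ↔ Forall₂ (· ≤ ·) a b := by
  simp [List.forall₂_map_left_iff, List.forall₂_map_right_iff]

namespace RookPoset

section InitSeg

variable {m k : ℕ}

theorem initSeg_of_le {f : Fin m → ℕ} {j : ℕ} (hj : m ≤ j) : initSeg f j = initSeg f m := by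
  unfold initSeg
  rw [Finset.filter_true_of_mem fun i _ => i.isLt.trans_le hj,
    Finset.filter_true_of_mem fun i _ => i.isLt]

theorem initSeg_comp_of_val_eq {n : ℕ} (f : Fin n → ℕ) {e : Fin m → Fin n}
    (he : ∀ i, (e i : ℕ) = i) {j : ℕ} (hj : j ≤ m) : initSeg (f ∘ e) j = initSeg f j := by
  unfold initSeg
  congr 1
  ext a
  simp only [Finset.mem_image, Finset.mem_filter, Finset.mem_univ, true_and, Function.comp_apply]
  constructor
  · rintro ⟨i, hi, rfl⟩
    exact ⟨e i, he i ▸ hi, rfl⟩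
  · rintro ⟨r, hr, rfl⟩
    exact ⟨⟨r, by omega⟩, hr, congrArg f (Fin.ext (he _))⟩

theorem initSeg_self (f : Fin m → ℕ) : initSeg f m = (Finset.univ.image f).sort := by
  unfold initSeg
  rw [Finset.filter_true_of_mem fun i _ => i.isLt]

theorem initSeg_append (u : Fin m → ℕ) (v : Fin k → ℕ) (huv : ∀ a b, u a < v b)
    (j : ℕ) :
    initSeg (Fin.append u v) (m + j) = initSeg u m ++ initSeg v j := by
  unfold initSeg
  rw [← Finset.sort_union_of_forall_lt]
  · congr 1
    ext a
    simp only [Finset.mem_union, Finset.mem_image, Finset.mem_filter, Finset.mem_univ,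
      true_and, Fin.is_lt]
    constructor
    · rintro ⟨i, hi, rfl⟩
      induction i using Fin.addCases with
      | left i => exact .inl ⟨i, by simp⟩
      | right i => exact .inr ⟨i, by simpa using hi, by simp⟩
    · rintro (⟨i, rfl⟩ | ⟨i, hi, rfl⟩)
      · exact ⟨Fin.castAdd k i, by simp; omega, by simp⟩
      · exact ⟨Fin.natAdd m i, by simpa using hi, by simp⟩
  · simp only [Finset.mem_image, Finset.mem_filter, Finset.mem_univ, true_and]
    rintro _ ⟨a, -, rfl⟩ _ ⟨b, -, rfl⟩
    exact huv a b

theorem initSeg_add_const (v : Fin k → ℕ) (c j : ℕ) :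
    initSeg (fun i => v i + c) j = (initSeg v j).map (· + c) := by
  unfold initSeg
  set s := Finset.univ.filter fun i : Fin k => (i : ℕ) < j
  have hmap : s.image (fun i => v i + c) = (s.image v).map (addRightEmbedding c) := by
    simp [Finset.map_eq_image, Finset.image_image, Function.comp_def]
  rw [hmap, ← StrictMonoOn.map_finsetSort]
  · rfl
  · exact fun a _ b _ h => by simpa

end InitSeg

theorem rle_iff_forall_le {n : ℕ} {lam : Partition n} {x y : Placement lam} :
    rle x y ↔ ∀ j ≤ n, List.Forall₂ (· ≤ ·) (initSeg x.col j) (initSeg y.col j) := by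
  refine ⟨fun h j _ => h j, fun h j => ?_⟩
  rcases le_total j n with hj | hj
  · exact h j hj
  · rw [initSeg_of_le hj, initSeg_of_le hj]
    exact h n le_rfl

theorem Partition.getElem?_gjw {n : ℕ} (lam : Partition n) (i : Fin n) :
    lam.gjw[(i : ℕ)]? = some (lam.part i - (i + 1)) := by
  simp [Partition.gjw]

theorem Partition.part_eq_of_getElem?_gjw {n : ℕ} (lam : Partition n) {i : Fin n} {g : ℕ}
    (h : lam.gjw[(i : ℕ)]? = some g) : lam.part i = g + (i + 1) := by
  have := lam.staircase i
  rw [lam.getElem?_gjw, Option.some_inj] at h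
  omega

theorem Partition.length_gjw {n : ℕ} (lam : Partition n) : lam.gjw.length = n := by
  simp [Partition.gjw]

theorem image_col_castAdd {m k : ℕ} {lam : Partition (m + k)}
    (hlam : ∀ i : Fin m, lam.part (Fin.castAdd k i) ≤ m) (x : Placement lam) :
    Finset.univ.image (fun i => x.col (Fin.castAdd k i)) = Finset.Icc 1 m := by
  refine Finset.eq_of_subset_of_card_le (fun a ha => ?_) ?_
  · obtain ⟨i, -, rfl⟩ := Finset.mem_image.1 ha
    exact Finset.mem_Icc.2 ⟨x.pos _, (x.le_part _).trans (hlam i)⟩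
  · rw [Finset.card_image_of_injective _ fun a b hab => Fin.castAdd_injective m k (x.inj hab)]
    simp

theorem lt_col_natAdd {m k : ℕ} {lam : Partition (m + k)}
    (hlam : ∀ i : Fin m, lam.part (Fin.castAdd k i) ≤ m) (x : Placement lam) (j : Fin k) :
    m < x.col (Fin.natAdd m j) := by
  by_contra! hle
  have hmem : x.col (Fin.natAdd m j) ∈ Finset.Icc 1 m := Finset.mem_Icc.2 ⟨x.pos _, hle⟩
  rw [← image_col_castAdd hlam x] at hmem
  obtain ⟨i, -, hi⟩ := Finset.mem_image.1 hmem
  have := congrArg Fin.val (x.inj hi)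
  simp only [Fin.val_castAdd, Fin.val_natAdd] at this
  omega

def Placement.freeCol {n : ℕ} {lam : Partition n} (p : Placement lam) : ℕ :=
  (Finset.Icc 1 (n + 1) \ Finset.univ.image p.col).min' <| Finset.card_pos.1 <| by
    have h1 := Finset.le_card_sdiff (Finset.univ.image p.col) (Finset.Icc 1 (n + 1))
    have h2 : (Finset.univ.image p.col).card ≤ n := Finset.card_image_le.trans (by simp)
    rw [Nat.card_Icc] at h1
    omega

theorem Placement.freeCol_mem {n : ℕ} {lam : Partition n} (p : Placement lam) :
    p.freeCol ∈ Finset.Icc 1 (n + 1) \ Finset.univ.image p.col :=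
  Finset.min'_mem _ _

section Stack

variable {n₁ n₂ : ℕ} {lam1 : Partition n₁} {lam2 : Partition n₂}
  {lam : Partition (n₁ + 1 + n₂)}

structure IsStack (lam1 : Partition n₁) (lam2 : Partition n₂)
    (lam : Partition (n₁ + 1 + n₂)) : Prop where
  part_low : ∀ i, lam.part (Fin.castAdd n₂ i.castSucc) = lam1.part i
  part_mid : lam.part (Fin.castAdd n₂ (Fin.last n₁)) = n₁ + 1
  part_high : ∀ j, lam.part (Fin.natAdd (n₁ + 1) j) = lam2.part j + (n₁ + 1)

theorem isStack_of_gjw_eq (h : lam.gjw = lam1.gjw ++ [0] ++ lam2.gjw) :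
    IsStack lam1 lam2 lam where
  part_low i := by
    have hi : lam.gjw[(i : ℕ)]? = some (lam1.part i - (i + 1)) := by
      rw [h, List.getElem?_append_left (by simp [Partition.length_gjw]),
        List.getElem?_append_left (by simp [Partition.length_gjw]), lam1.getElem?_gjw]
    have := lam.part_eq_of_getElem?_gjw (i := Fin.castAdd n₂ i.castSucc) hi
    have := lam1.staircase i
    simp only [Fin.val_castAdd, Fin.val_castSucc] at *
    omega
  part_mid := by
    simpa using lam.part_eq_of_getElem?_gjw (i := Fin.castAdd n₂ (Fin.last n₁)) (g := 0) <| by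
      simp [h, Partition.length_gjw]
  part_high j := by
    have hj : lam.gjw[n₁ + 1 + (j : ℕ)]? = some (lam2.part j - (j + 1)) := by
      rw [h, List.getElem?_append_right (by simp [Partition.length_gjw])]
      simpa [Partition.length_gjw] using lam2.getElem?_gjw j
    have := lam.part_eq_of_getElem?_gjw (i := Fin.natAdd (n₁ + 1) j) hj
    have := lam2.staircase j
    simp only [Fin.val_natAdd] at *
    omega

namespace IsStack

theorem part_castAdd_le (h : IsStack lam1 lam2 lam) (i : Fin (n₁ + 1)) :
    lam.part (Fin.castAdd n₂ i) ≤ n₁ + 1 :=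
  calc lam.part (Fin.castAdd n₂ i) ≤ lam.part (Fin.castAdd n₂ (Fin.last n₁)) :=
        lam.mono (Fin.le_iff_val_le_val.2 (by simpa using Fin.is_le i))
    _ = n₁ + 1 := h.part_mid

theorem part_le (h : IsStack lam1 lam2 lam) (i : Fin n₁) : lam1.part i ≤ n₁ + 1 :=
  h.part_low i ▸ h.part_castAdd_le _

theorem snoc_freeCol_mem_Icc (h : IsStack lam1 lam2 lam) (p : Placement lam1)
    (i : Fin (n₁ + 1)) :
    Fin.snoc (α := fun _ => ℕ) p.col p.freeCol i ∈ Finset.Icc 1 (n₁ + 1) := by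
  induction i using Fin.lastCases with
  | last => simpa using (Finset.mem_sdiff.1 p.freeCol_mem).1
  | cast i => simpa using ⟨p.pos i, (p.le_part i).trans (h.part_le i)⟩

variable (h : IsStack lam1 lam2 lam)

def lower (x : Placement lam) : Placement lam1 where
  col i := x.col (Fin.castAdd n₂ i.castSucc)
  inj := x.inj.comp ((Fin.castAdd_injective _ _).comp (Fin.castSucc_injective _))
  pos _ := x.pos _
  le_part i := h.part_low i ▸ x.le_part _

def upper (x : Placement lam) : Placement lam2 where
  col j := x.col (Fin.natAdd (n₁ + 1) j) - (n₁ + 1)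
  inj a b hab := by
    have ha := lt_col_natAdd h.part_castAdd_le x a
    have hb := lt_col_natAdd h.part_castAdd_le x b
    exact Fin.natAdd_injective _ _ (x.inj (by simp only at hab; omega))
  pos j := by
    have := lt_col_natAdd h.part_castAdd_le x j
    omega
  le_part j := by
    have := x.le_part (Fin.natAdd (n₁ + 1) j)
    rw [h.part_high] at this
    omega

theorem upper_col_add (x : Placement lam) (j : Fin n₂) :
    (h.upper x).col j + (n₁ + 1) = x.col (Fin.natAdd (n₁ + 1) j) := by
  have := lt_col_natAdd h.part_castAdd_le x j
  simp only [upper]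
  omega

def glue (p : Placement lam1 × Placement lam2) : Placement lam where
  col := Fin.append (Fin.snoc p.1.col p.1.freeCol) fun j => p.2.col j + (n₁ + 1)
  inj := by
    refine Fin.append_injective_iff.2 ⟨Fin.snoc_injective_iff.2 ⟨p.1.inj, ?_⟩,
      fun a b hab => p.2.inj (by simpa using hab), fun i j => ?_⟩
    · rintro ⟨i, hi⟩
      exact (Finset.mem_sdiff.1 p.1.freeCol_mem).2 (hi ▸ Finset.mem_image_of_mem _ (by simp))
    · exact ne_of_lt ((Finset.mem_Icc.1 (h.snoc_freeCol_mem_Icc p.1 i)).2.trans_lt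
        (Nat.lt_add_of_pos_left (p.2.pos j)))
  pos := by
    refine Fin.addCases (fun i => ?_) (fun j => ?_) <;>
      simp only [Fin.append_left, Fin.append_right]
    · exact (Finset.mem_Icc.1 (h.snoc_freeCol_mem_Icc p.1 i)).1
    · omega
  le_part := by
    refine Fin.addCases (fun i => ?_) (fun j => ?_)
    · induction i using Fin.lastCases with
      | last =>
        simpa [h.part_mid] using (Finset.mem_Icc.1 (h.snoc_freeCol_mem_Icc p.1 (Fin.last n₁))).2
      | cast i => simpa [h.part_low] using p.1.le_part i
    · simpa [h.part_high] using p.2.le_part j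

theorem lower_glue (p : Placement lam1 × Placement lam2) : h.lower (h.glue p) = p.1 := by
  ext i
  simp [lower, glue]

theorem upper_glue (p : Placement lam1 × Placement lam2) : h.upper (h.glue p) = p.2 := by
  ext j
  simp [upper, glue]

theorem freeCol_lower (x : Placement lam) :
    (h.lower x).freeCol = x.col (Fin.castAdd n₂ (Fin.last n₁)) := by
  obtain ⟨hIcc, hfree⟩ := Finset.mem_sdiff.1 (h.lower x).freeCol_mem
  rw [← image_col_castAdd h.part_castAdd_le x] at hIcc
  obtain ⟨r, -, hr⟩ := Finset.mem_image.1 hIcc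
  induction r using Fin.lastCases with
  | last => exact hr.symm
  | cast i => exact absurd (Finset.mem_image.2 ⟨i, Finset.mem_univ _, hr⟩) hfree

theorem glue_lower_upper (x : Placement lam) : h.glue (h.lower x, h.upper x) = x := by
  ext : 1
  conv_rhs => rw [← Fin.append_castAdd_natAdd (f := x.col)]
  refine congrArg₂ Fin.append (funext fun i => ?_) (funext fun j => h.upper_col_add x j)
  induction i using Fin.lastCases with
  | last => simpa using h.freeCol_lower x
  | cast i => simp [lower]

def placementEquiv : Placement lam ≃ Placement lam1 × Placement lam2 where
  toFun x := (h.lower x, h.upper x)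
  invFun := h.glue
  left_inv := h.glue_lower_upper
  right_inv p := Prod.ext (h.lower_glue p) (h.upper_glue p)

theorem initSeg_lower (x : Placement lam) {j : ℕ} (hj : j ≤ n₁) :
    initSeg x.col j = initSeg (h.lower x).col j :=
  (initSeg_comp_of_val_eq x.col (e := fun i => Fin.castAdd n₂ i.castSucc) (fun _ => rfl)
    hj).symm

theorem initSeg_upper (x : Placement lam) (k : ℕ) :
    initSeg x.col (n₁ + 1 + k) =
      (Finset.Icc 1 (n₁ + 1)).sort ++ (initSeg (h.upper x).col k).map (· + (n₁ + 1)) := by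
  have hsplit : ∀ a b, x.col (Fin.castAdd n₂ a) < x.col (Fin.natAdd (n₁ + 1) b) := fun a b =>
    ((x.le_part _).trans (h.part_castAdd_le a)).trans_lt (lt_col_natAdd h.part_castAdd_le x b)
  rw [← Fin.append_castAdd_natAdd (f := x.col), initSeg_append _ _ hsplit, initSeg_self,
    image_col_castAdd h.part_castAdd_le, ← initSeg_add_const]
  simp only [h.upper_col_add]

theorem rle_iff (x y : Placement lam) :
    rle x y ↔ rle (h.lower x) (h.lower y) ∧ rle (h.upper x) (h.upper y) := by
  rw [rle_iff_forall_le (x := h.lower x)]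
  constructor
  · intro hxy
    refine ⟨fun j hj => ?_, fun k => ?_⟩
    · rw [← h.initSeg_lower x hj, ← h.initSeg_lower y hj]
      exact hxy j
    · have hk := hxy (n₁ + 1 + k)
      rwa [h.initSeg_upper x, h.initSeg_upper y, List.forall₂_append_left_iff,
        List.forall₂_le_map_add_right_iff] at hk
  · rintro ⟨hlow, hup⟩ j
    rcases le_or_gt j n₁ with hj | hj
    · rw [h.initSeg_lower x hj, h.initSeg_lower y hj]
      exact hlow j hj
    · obtain ⟨k, rfl⟩ : ∃ k, j = n₁ + 1 + k := ⟨j - (n₁ + 1), by omega⟩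
      rw [h.initSeg_upper x, h.initSeg_upper y, List.forall₂_append_left_iff,
        List.forall₂_le_map_add_right_iff]
      exact hup k

end IsStack

end Stack

/-- If the GJW sequence of `λ` is the concatenation of the GJW sequence of
`λ¹`, a single `0`, and the GJW sequence of `λ²`, then the rook poset of `λ` is isomorphic
to the product of the rook posets of `λ¹` and `λ²` (ordered componentwise). -/
theorem rookPoset_product {n₁ n₂ n : ℕ} (lam1 : Partition n₁) (lam2 : Partition n₂)
    (lam : Partition n) (h : lam.gjw = lam1.gjw ++ [0] ++ lam2.gjw) :
    ∃ e : Placement lam ≃ Placement lam1 × Placement lam2,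
      ∀ a b : Placement lam,
        rle a b ↔ (rle (e a).1 (e b).1 ∧ rle (e a).2 (e b).2) := by
  obtain rfl : n = n₁ + 1 + n₂ := by
    have hlen := congrArg List.length h
    simp only [Partition.length_gjw, List.length_append, List.length_singleton] at hlen
    omega
  have hstack := isStack_of_gjw_eq h
  exact ⟨hstack.placementEquiv, hstack.rle_iff⟩

end RookPoset
end
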